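/- arXiv:2410.02561 — 5 statements merged into one kernel-verified Lean document; each statement's English description precedes it below -/
import Mathlib

section
/- Let P_0 be a distribution on [0, R] with continuous density p_0 satisfying inf_{r∈[0,R]} p_0(r) = μ > 0. Then ψ(r) := E_{r*∼P_0}[l_α(r, r*)] is μ-strongly convex on [0, R]. -/
/-- The quantile (pinball) loss `l_α(r, r*) = (1[r ≥ r*] − α)(r − r*)`. -/
noncomputable def quantileLoss (α r rstar : ℝ) : ℝ :=
  ((if rstar ≤ r then (1 : ℝ) else 0) - α) * (r - rstar)

theorem psi_strongly_convex (R : ℝ) (hR : 0 < R) (α : ℝ) (hα : α ∈ Set.Icc (0:ℝ) 1)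
    (p0 : ℝ → ℝ) (hp0cont : ContinuousOn p0 (Set.Icc 0 R))
    (hp0int : ∫ s in (0:ℝ)..R, p0 s = 1)
    (μ : NNReal) (hμ : 0 < μ) (hinf : ∀ x ∈ Set.Icc (0:ℝ) R, (μ : ℝ) ≤ p0 x) :
    StrongConvexOn (Set.Icc (0:ℝ) R) μ
      (fun r => ∫ rstar in (0:ℝ)..R, quantileLoss α r rstar * p0 rstar) := by
  set P : ℝ → ℝ := fun r => ∫ s in (0:ℝ)..r, p0 s with hP
  set Q : ℝ → ℝ := fun r => ∫ s in (0:ℝ)..r, s * p0 s with hQ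
  set M : ℝ := Q R with hM
  set H : ℝ → ℝ := fun r => r * P r - Q r - α * r + α * M with hH
  -- integrability facts
  have hip0 : ∀ a b, a ∈ Set.Icc (0:ℝ) R → b ∈ Set.Icc (0:ℝ) R →
      IntervalIntegrable p0 MeasureTheory.volume a b := by
    intro a b ha hb
    apply ContinuousOn.intervalIntegrable
    apply hp0cont.mono
    exact Set.uIcc_subset_Icc ha hb
  have hisp0 : ∀ a b, a ∈ Set.Icc (0:ℝ) R → b ∈ Set.Icc (0:ℝ) R →
      IntervalIntegrable (fun s => s * p0 s) MeasureTheory.volume a b := by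
    intro a b ha hb
    apply ContinuousOn.intervalIntegrable
    exact (continuousOn_id.mul (hp0cont.mono (Set.uIcc_subset_Icc ha hb)))
  -- key identity
  have hkey : ∀ r ∈ Set.Icc (0:ℝ) R,
      (∫ rstar in (0:ℝ)..R, quantileLoss α r rstar * p0 rstar) = H r := by
    intro r hr
    obtain ⟨hr0, hrR⟩ := hr
    have hcontA : ContinuousOn (fun s => if s ≤ r then (r - s) * p0 s else 0)
        (Set.Icc 0 r) := by
      have heq : Set.EqOn (fun s => if s ≤ r then (r - s) * p0 s else 0)
          (fun s => (r - s) * p0 s) (Set.Icc 0 r) := by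
        intro s hs; simp [hs.2]
      exact ContinuousOn.congr ((continuousOn_const.sub continuousOn_id).mul
        (hp0cont.mono (Set.Icc_subset_Icc le_rfl hrR))) heq
    have hcontB : ContinuousOn (fun s => if s ≤ r then (r - s) * p0 s else 0)
        (Set.Icc r R) := by
      have heq : Set.EqOn (fun s => if s ≤ r then (r - s) * p0 s else 0)
          (fun _ => (0:ℝ)) (Set.Icc r R) := by
        intro s hs
        by_cases h : s ≤ r
        · have : s = r := le_antisymm h hs.1
          simp [this]
        · simp [h]
      exact ContinuousOn.congr continuousOn_const heq
    have hiA : IntervalIntegrable (fun s => if s ≤ r then (r - s) * p0 s else 0)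
        MeasureTheory.volume 0 r := by
      apply ContinuousOn.intervalIntegrable
      rwa [Set.uIcc_of_le hr0]
    have hiB : IntervalIntegrable (fun s => if s ≤ r then (r - s) * p0 s else 0)
        MeasureTheory.volume r R := by
      apply ContinuousOn.intervalIntegrable
      rwa [Set.uIcc_of_le hrR]
    have h1 : (∫ rstar in (0:ℝ)..R, quantileLoss α r rstar * p0 rstar)
        = (∫ s in (0:ℝ)..R, (if s ≤ r then (r - s) * p0 s else 0))
          - α * ∫ s in (0:ℝ)..R, (r - s) * p0 s := by
      rw [← intervalIntegral.integral_const_mul, ← intervalIntegral.integral_sub]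
      · apply intervalIntegral.integral_congr
        intro s hs
        simp only [quantileLoss]
        by_cases h : s ≤ r <;> simp [h] <;> ring
      · exact hiA.trans hiB
      · apply IntervalIntegrable.const_mul
        apply ContinuousOn.intervalIntegrable
        rw [Set.uIcc_of_le hR.le]
        exact (continuousOn_const.sub continuousOn_id).mul hp0cont
    rw [h1]
    have h2 : (∫ s in (0:ℝ)..R, (if s ≤ r then (r - s) * p0 s else 0))
        = ∫ s in (0:ℝ)..r, (r - s) * p0 s := by
      rw [← intervalIntegral.integral_add_adjacent_intervals hiA hiB]
      have e1 : (∫ s in (0:ℝ)..r, (if s ≤ r then (r - s) * p0 s else 0))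
          = ∫ s in (0:ℝ)..r, (r - s) * p0 s := by
        apply intervalIntegral.integral_congr
        intro s hs
        rw [Set.uIcc_of_le hr0] at hs
        simp [hs.2]
      have e2 : (∫ s in r..R, (if s ≤ r then (r - s) * p0 s else 0)) = 0 := by
        have : (∫ s in r..R, (if s ≤ r then (r - s) * p0 s else 0))
            = ∫ _ in r..R, (0:ℝ) := by
          apply intervalIntegral.integral_congr
          intro s hs
          rw [Set.uIcc_of_le hrR] at hs
          by_cases h : s ≤ r
          · have : s = r := le_antisymm h hs.1
            simp [this]
          · simp [h]
        rw [this, intervalIntegral.integral_zero]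
      rw [e1, e2, add_zero]
    rw [h2]
    have hmem : r ∈ Set.Icc (0:ℝ) R := ⟨hr0, hrR⟩
    have h0 : (0:ℝ) ∈ Set.Icc (0:ℝ) R := ⟨le_rfl, hR.le⟩
    have hRmem : R ∈ Set.Icc (0:ℝ) R := ⟨hR.le, le_rfl⟩
    have h3 : (∫ s in (0:ℝ)..r, (r - s) * p0 s) = r * P r - Q r := by
      have : ∀ s, (r - s) * p0 s = r * p0 s - s * p0 s := by intro s; ring
      simp_rw [this]
      rw [intervalIntegral.integral_sub ((hip0 0 r h0 hmem).const_mul r) (hisp0 0 r h0 hmem),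
        intervalIntegral.integral_const_mul]
    have h4 : (∫ s in (0:ℝ)..R, (r - s) * p0 s) = r - M := by
      have : ∀ s, (r - s) * p0 s = r * p0 s - s * p0 s := by intro s; ring
      simp_rw [this]
      rw [intervalIntegral.integral_sub ((hip0 0 R h0 hRmem).const_mul r) (hisp0 0 R h0 hRmem),
        intervalIntegral.integral_const_mul, hp0int, mul_one]
    rw [h3, h4, hH]
    ring
  -- continuity of H
  have hPc : ContinuousOn P (Set.Icc 0 R) := by
    have := intervalIntegral.continuousOn_primitive_interval'
      (hip0 0 R ⟨le_rfl, hR.le⟩ ⟨hR.le, le_rfl⟩) Set.left_mem_uIcc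
    rwa [Set.uIcc_of_le hR.le] at this
  have hQc : ContinuousOn Q (Set.Icc 0 R) := by
    have := intervalIntegral.continuousOn_primitive_interval'
      (hisp0 0 R ⟨le_rfl, hR.le⟩ ⟨hR.le, le_rfl⟩) Set.left_mem_uIcc
    rwa [Set.uIcc_of_le hR.le] at this
  have hHc : ContinuousOn H (Set.Icc 0 R) :=
    (((continuousOn_id.mul hPc).sub hQc).sub (continuousOn_const.mul continuousOn_id)).add
      continuousOn_const
  -- derivative of H at interior points
  have hHderiv : ∀ r ∈ Set.Ioo (0:ℝ) R, HasDerivAt H (P r - α) r := by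
    intro r hr
    have hrmem : r ∈ Set.Icc (0:ℝ) R := ⟨hr.1.le, hr.2.le⟩
    have hnhds : Set.Icc (0:ℝ) R ∈ nhds r := Icc_mem_nhds hr.1 hr.2
    have hca : ContinuousAt p0 r := hp0cont.continuousAt hnhds
    have hsm : StronglyMeasurableAtFilter p0 (nhds r) := by
      refine ⟨Set.Ioo 0 R, Ioo_mem_nhds hr.1 hr.2, ?_⟩
      exact ((hp0cont.mono Set.Ioo_subset_Icc_self).aestronglyMeasurable isOpen_Ioo.measurableSet)
    have hPd : HasDerivAt P (p0 r) r :=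
      intervalIntegral.integral_hasDerivAt_right
        (hip0 0 r ⟨le_rfl, hR.le⟩ hrmem) hsm hca
    have hca2 : ContinuousAt (fun s => s * p0 s) r := continuousAt_id.mul hca
    have hsm2 : StronglyMeasurableAtFilter (fun s => s * p0 s) (nhds r) := by
      refine ⟨Set.Ioo 0 R, Ioo_mem_nhds hr.1 hr.2, ?_⟩
      exact ((continuousOn_id.mul (hp0cont.mono Set.Ioo_subset_Icc_self)).aestronglyMeasurable
        isOpen_Ioo.measurableSet)
    have hQd : HasDerivAt Q (r * p0 r) r :=
      intervalIntegral.integral_hasDerivAt_right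
        (hisp0 0 r ⟨le_rfl, hR.le⟩ hrmem) hsm2 hca2
    have : HasDerivAt H (1 * P r + r * p0 r - r * p0 r - α * 1 + 0) r := by
      exact ((((hasDerivAt_id r).mul hPd).sub hQd).sub
        ((hasDerivAt_id r).const_mul α)).add (hasDerivAt_const r (α * M))
    convert this using 1
    ring
  -- P is "μ-strongly monotone"
  have hPmono : ∀ a ∈ Set.Icc (0:ℝ) R, ∀ b ∈ Set.Icc (0:ℝ) R, a ≤ b →
      (μ:ℝ) * (b - a) ≤ P b - P a := by
    intro a ha b hb hab
    have hsplit : P a + ∫ s in a..b, p0 s = P b :=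
      intervalIntegral.integral_add_adjacent_intervals
        (hip0 0 a ⟨le_rfl, hR.le⟩ ha) (hip0 a b ha hb)
    have : P b - P a = ∫ s in a..b, p0 s := by rw [← hsplit]; ring
    rw [this]
    have : (μ:ℝ) * (b - a) = ∫ _ in a..b, (μ:ℝ) := by
      rw [intervalIntegral.integral_const, smul_eq_mul, mul_comm]
    rw [this]
    apply intervalIntegral.integral_mono_on hab intervalIntegrable_const (hip0 a b ha hb)
    intro s hs
    exact hinf s ⟨ha.1.trans hs.1, hs.2.trans hb.2⟩
  -- now conclude
  rw [strongConvexOn_iff_convex]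
  set g : ℝ → ℝ := fun r => H r - (μ:ℝ) / 2 * r ^ 2 with hg
  have hgeq : Set.EqOn (fun x : ℝ =>
      (∫ rstar in (0:ℝ)..R, quantileLoss α x rstar * p0 rstar) - (μ:ℝ) / 2 * ‖x‖ ^ 2)
      g (Set.Icc 0 R) := by
    intro x hx
    simp only [hg, Real.norm_eq_abs, sq_abs]
    rw [hkey x hx]
  have hint : interior (Set.Icc (0:ℝ) R) = Set.Ioo 0 R := interior_Icc
  have hgd : ∀ r ∈ Set.Ioo (0:ℝ) R, HasDerivAt g (P r - α - (μ:ℝ) * r) r := by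
    intro r hr
    have : HasDerivAt g ((P r - α) - (μ:ℝ) / 2 * (2 * r ^ 1)) r :=
      (hHderiv r hr).sub (((hasDerivAt_pow 2 r)).const_mul ((μ:ℝ)/2))
    convert this using 1
    ring
  have hconv : ConvexOn ℝ (Set.Icc (0:ℝ) R) g := by
    apply MonotoneOn.convexOn_of_deriv (convex_Icc 0 R)
    · exact (hHc.sub ((continuousOn_const).mul (continuousOn_pow 2)))
    · rw [hint]
      intro r hr
      exact ((hgd r hr).differentiableAt).differentiableWithinAt
    · rw [hint]
      intro a ha b hb hab
      rw [(hgd a ha).deriv, (hgd b hb).deriv]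
      have := hPmono a ⟨ha.1.le, ha.2.le⟩ b ⟨hb.1.le, hb.2.le⟩ hab
      nlinarith
  exact (ConvexOn.congr hconv hgeq.symm)
end

section
/- Equivalence theorem: Let p_0 be a strictly positive density on [0, R], let r*_1,…,r*_{t−1} ∈ [0, R], λ_t ∈ (0,1), and α ∈ (0,1). Define P_t = λ_t P_0 + (1−λ_t) \bar{P}(r*_{1:t−1}) (mixture of the prior and the empirical distribution), and let r_t(α) = q_α(P_t) be the α-quantile of P_t. Then r_t(α) is a minimizer over ℝ of F_t(r) = (λ_t(t−1)/(1−λ_t)) ψ(r) + Σ_{i=1}^{t−1} l_α(r, r*_i), where ψ(r) = E_{r*∼P_0}[l_α(r, r*)]. -/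
open MeasureTheory

lemma quantileLoss_measurable (α r : ℝ) : Measurable (quantileLoss α r) := by
  have h : Measurable fun s : ℝ => (if s ≤ r then (1:ℝ) else 0) :=
    Measurable.ite measurableSet_Iic measurable_const measurable_const
  exact (h.sub measurable_const).mul (measurable_const.sub measurable_id)

lemma quantileLoss_key_ge (α q r s : ℝ) (h : q ≤ r) :
    quantileLoss α q s + (r - q) * ((Set.Iic q).indicator (fun _ => (1:ℝ)) s - α)
      ≤ quantileLoss α r s := by
  simp only [quantileLoss, Set.indicator_apply, Set.mem_Iic]
  split_ifs <;> nlinarith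

lemma quantileLoss_key_le (α q r s : ℝ) (h : r ≤ q) :
    quantileLoss α q s + (q - r) * (α - (Set.Iio q).indicator (fun _ => (1:ℝ)) s)
      ≤ quantileLoss α r s := by
  simp only [quantileLoss, Set.indicator_apply, Set.mem_Iio]
  split_ifs <;> nlinarith

/-- Equivalence theorem: the α-quantile of the regularized belief
`P_t = λ_t P_0 + (1−λ_t) \bar P(r*_{1:t−1})` minimizes the FTRL objective
`F_t(r) = (λ_t(t−1)/(1−λ_t)) ψ(r) + Σ_i l_α(r, r*_i)`, where `ψ(r) = E_{P_0}[l_α(r,·)]`. -/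
theorem bayesian_cp_ftrl_equivalence
    (R : ℝ) (hR : 0 < R) (α : ℝ) (hα : α ∈ Set.Ioo (0:ℝ) 1)
    (p0 : ℝ → ℝ) (hp0cont : ContinuousOn p0 (Set.Icc 0 R))
    (hp0pos : ∀ x ∈ Set.Icc (0:ℝ) R, 0 < p0 x)
    (P0 : Measure ℝ)
    (hP0 : P0 = (volume.restrict (Set.Icc 0 R)).withDensity
      (fun x => ENNReal.ofReal (p0 x)))
    (hP0prob : IsProbabilityMeasure P0)
    (n : ℕ) (hn : 1 ≤ n) (rs : Fin n → ℝ) (hrs : ∀ i, rs i ∈ Set.Icc (0:ℝ) R)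
    (lam : ℝ) (hlam : lam ∈ Set.Ioo (0:ℝ) 1)
    (Pt : Measure ℝ)
    (hPt : Pt = ENNReal.ofReal lam • P0
        + ENNReal.ofReal ((1 - lam) / n) • ∑ i : Fin n, Measure.dirac (rs i))
    (rt : ℝ) (hrt : rt = sInf {x : ℝ | α ≤ (Pt (Set.Iic x)).toReal}) :
    IsMinOn (fun r : ℝ =>
        lam * n / (1 - lam) * (∫ s, quantileLoss α r s ∂P0)
          + ∑ i : Fin n, quantileLoss α r (rs i))
      Set.univ rt := by
  obtain ⟨hα0, hα1⟩ := hα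
  obtain ⟨hlam0, hlam1⟩ := hlam
  have hn0 : (0:ℝ) < n := by exact_mod_cast Nat.lt_of_lt_of_le Nat.zero_lt_one hn
  have h1lam : (0:ℝ) < 1 - lam := by linarith
  -- P0 of complement of Icc 0 R is zero
  have hP0compl : P0 (Set.Icc 0 R)ᶜ = 0 := by
    rw [hP0, withDensity_apply _ measurableSet_Icc.compl,
      Measure.restrict_restrict measurableSet_Icc.compl, Set.compl_inter_self,
      Measure.restrict_empty, lintegral_zero_measure]
  -- Pt applied to any set
  have hPtapply : ∀ t : Set ℝ, Pt t = ENNReal.ofReal lam * P0 t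
      + ENNReal.ofReal ((1-lam)/n) * ∑ i : Fin n, (Measure.dirac (rs i)) t := by
    intro t
    rw [hPt]
    simp [Measure.add_apply, Measure.smul_apply, smul_eq_mul,
      Measure.finset_sum_apply]
  have hPtcompl : Pt (Set.Icc 0 R)ᶜ = 0 := by
    rw [hPtapply, hP0compl]
    have h : ∀ i : Fin n, (Measure.dirac (rs i)) (Set.Icc 0 R)ᶜ = 0 := by
      intro i
      rw [Measure.dirac_apply]
      simp [Set.indicator_apply, hrs i]
    simp [h]
  have hPtuniv : Pt Set.univ = 1 := by
    rw [hPtapply]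
    simp only [measure_univ, Measure.dirac_apply, Set.indicator_univ, Pi.one_apply,
      Finset.sum_const, Finset.card_univ, Fintype.card_fin, nsmul_eq_mul, mul_one]
    rw [← ENNReal.ofReal_natCast n, ← ENNReal.ofReal_mul (by positivity),
      div_mul_cancel₀ _ (ne_of_gt hn0), ← ENNReal.ofReal_add
        (le_of_lt hlam0) (by linarith)]
    norm_num
  have hPtprob : IsProbabilityMeasure Pt := ⟨hPtuniv⟩
  have hPtfin : ∀ t : Set ℝ, Pt t ≠ ⊤ := fun t => measure_ne_top Pt t
  -- a.e. bounds
  have haePt : ∀ᵐ s ∂Pt, s ∈ Set.Icc (0:ℝ) R := by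
    rw [ae_iff]
    exact hPtcompl
  have haeP0 : ∀ᵐ s ∂P0, s ∈ Set.Icc (0:ℝ) R := by
    rw [ae_iff]
    exact hP0compl
  -- integrability
  have hbound : ∀ (μ : Measure ℝ) [IsFiniteMeasure μ], (∀ᵐ s ∂μ, s ∈ Set.Icc (0:ℝ) R) →
      ∀ r : ℝ, Integrable (quantileLoss α r) μ := by
    intro μ _ hae r
    refine Integrable.mono' (integrable_const (|r| + R))
      ((quantileLoss_measurable α r).aestronglyMeasurable) ?_
    filter_upwards [hae] with s hs
    obtain ⟨hs0, hsR⟩ := hs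
    simp only [quantileLoss, Real.norm_eq_abs, abs_mul]
    have h1 : |(if s ≤ r then (1:ℝ) else 0) - α| ≤ 1 := by
      split_ifs <;> (rw [abs_le]; constructor <;> linarith)
    have h2 : |r - s| ≤ |r| + R := by
      rw [abs_le]
      rcases abs_cases r with ⟨h, _⟩ | ⟨h, _⟩ <;> constructor <;> linarith
    nlinarith [abs_nonneg ((if s ≤ r then (1:ℝ) else 0) - α), abs_nonneg (r - s)]
  have hintPt : ∀ r : ℝ, Integrable (quantileLoss α r) Pt := hbound Pt haePt
  have hintP0 : ∀ r : ℝ, Integrable (quantileLoss α r) P0 := hbound P0 haeP0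
  have hintd : ∀ (r x : ℝ), Integrable (quantileLoss α r) (Measure.dirac x) := by
    intro r x
    refine ⟨(quantileLoss_measurable α r).aestronglyMeasurable, ?_⟩
    rw [HasFiniteIntegral, lintegral_dirac]
    exact ENNReal.coe_lt_top
  -- decomposition of the integral over Pt
  have ha0 : ENNReal.ofReal lam ≠ 0 := by
    simp [ENNReal.ofReal_eq_zero]; linarith
  have hb0 : ENNReal.ofReal ((1-lam)/n) ≠ 0 := by
    simp [ENNReal.ofReal_eq_zero]; positivity
  have hdecomp : ∀ r : ℝ, ∫ s, quantileLoss α r s ∂Pt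
      = lam * (∫ s, quantileLoss α r s ∂P0)
        + (1-lam)/n * ∑ i : Fin n, quantileLoss α r (rs i) := by
    intro r
    rw [hPt, integral_add_measure
      ((integrable_smul_measure ha0 ENNReal.ofReal_ne_top).mpr (hintP0 r))
      ((integrable_smul_measure hb0 ENNReal.ofReal_ne_top).mpr
        (integrable_finset_sum_measure.mpr (fun i _ => hintd r (rs i)))),
      integral_smul_measure, integral_smul_measure,
      integral_finset_sum_measure (fun i _ => hintd r (rs i))]
    simp only [integral_dirac, smul_eq_mul,
      ENNReal.toReal_ofReal hlam0.le, ENNReal.toReal_ofReal (by positivity : (0:ℝ) ≤ (1-lam)/n)]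
  -- CDF facts
  set S : Set ℝ := {x : ℝ | α ≤ (Pt (Set.Iic x)).toReal} with hS
  have hSR : R ∈ S := by
    have h1 : Pt (Set.Iic R) = 1 := by
      have hu : Pt Set.univ ≤ Pt (Set.Iic R) + Pt (Set.Ioi R) := by
        rw [← Set.Iic_union_Ioi (a := R)]
        exact measure_union_le _ _
      have h0 : Pt (Set.Ioi R) = 0 := by
        refine measure_mono_null ?_ hPtcompl
        intro x hx
        simp only [Set.mem_Ioi] at hx
        simp only [Set.mem_compl_iff, Set.mem_Icc, not_and, not_le]
        intro _
        exact hx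
      rw [h0, add_zero, hPtuniv] at hu
      exact le_antisymm (le_trans (measure_mono (Set.subset_univ _)) hPtuniv.le) hu
    simp only [hS, Set.mem_setOf_eq, h1, ENNReal.toReal_one]
    linarith
  have hSne : S.Nonempty := ⟨R, hSR⟩
  have hSbdd : BddBelow S := by
    refine ⟨0, fun x hx => ?_⟩
    by_contra hx0
    push_neg at hx0
    have h0 : Pt (Set.Iic x) = 0 := by
      refine measure_mono_null ?_ hPtcompl
      intro y hy
      simp only [Set.mem_Iic] at hy
      simp only [Set.mem_compl_iff, Set.mem_Icc, not_and, not_le]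
      intro h
      linarith
    simp only [hS, Set.mem_setOf_eq, h0, ENNReal.toReal_zero] at hx
    linarith
  -- F(rt) ≥ α
  have hFrt : α ≤ (Pt (Set.Iic rt)).toReal := by
    have hstep : ∀ ε : ℝ, 0 < ε → ENNReal.ofReal α ≤ Pt (Set.Iic (rt + ε)) := by
      intro ε hε
      have : sInf S < rt + ε := by rw [← hrt]; linarith
      obtain ⟨x, hxS, hxlt⟩ := (csInf_lt_iff hSbdd hSne).mp this
      have hmono : Pt (Set.Iic x) ≤ Pt (Set.Iic (rt + ε)) :=
        measure_mono (Set.Iic_subset_Iic.mpr hxlt.le)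
      refine le_trans ?_ hmono
      rw [ENNReal.ofReal_le_iff_le_toReal (hPtfin _)]
      exact hxS
    have hInter : ⋂ k : ℕ, Set.Iic (rt + 1/(k+1)) = Set.Iic rt := by
      ext x
      simp only [Set.mem_iInter, Set.mem_Iic]
      constructor
      · intro h
        refine le_of_forall_pos_le_add fun ε hε => ?_
        obtain ⟨k, hk⟩ := exists_nat_one_div_lt hε
        exact le_trans (h k) (by linarith)
      · intro h k
        have : (0:ℝ) < 1/(k+1) := by positivity
        linarith
    have htend := tendsto_measure_iInter_atTop
      (μ := Pt) (s := fun k : ℕ => Set.Iic (rt + 1/(k+1)))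
      (fun k => measurableSet_Iic.nullMeasurableSet)
      (fun i j hij => Set.Iic_subset_Iic.mpr (by
        have : (1:ℝ)/(j+1) ≤ 1/(i+1) := by
          apply one_div_le_one_div_of_le (by positivity)
          exact_mod_cast add_le_add_left (Nat.cast_le.mpr hij) 1
        linarith))
      ⟨0, hPtfin _⟩
    rw [hInter] at htend
    have hlim : ENNReal.ofReal α ≤ Pt (Set.Iic rt) :=
      ge_of_tendsto' htend (fun k => hstep (1/(k+1)) (by positivity)) |>.trans_eq rfl
    rw [← ENNReal.ofReal_le_iff_le_toReal (hPtfin _)]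
    exact hlim
  -- F⁻(rt) ≤ α
  have hFrt' : (Pt (Set.Iio rt)).toReal ≤ α := by
    have hstep : ∀ x : ℝ, x < rt → Pt (Set.Iic x) ≤ ENNReal.ofReal α := by
      intro x hx
      have hxS : x ∉ S := by
        intro hxS
        have := csInf_le hSbdd hxS
        rw [← hrt] at this
        linarith
      simp only [hS, Set.mem_setOf_eq, not_le] at hxS
      rw [ENNReal.le_ofReal_iff_toReal_le (hPtfin _) hα0.le]
      exact hxS.le
    have hUnion : ⋃ k : ℕ, Set.Iic (rt - 1/(k+1)) = Set.Iio rt := by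
      ext x
      simp only [Set.mem_iUnion, Set.mem_Iic, Set.mem_Iio]
      constructor
      · rintro ⟨k, hk⟩
        have : (0:ℝ) < 1/(k+1) := by positivity
        linarith
      · intro h
        obtain ⟨k, hk⟩ := exists_nat_one_div_lt (show (0:ℝ) < rt - x by linarith)
        exact ⟨k, by linarith⟩
    have htend := tendsto_measure_iUnion_atTop
      (μ := Pt) (s := fun k : ℕ => Set.Iic (rt - 1/(k+1)))
      (fun i j hij => Set.Iic_subset_Iic.mpr (by
        have : (1:ℝ)/(j+1) ≤ 1/(i+1) := by
          apply one_div_le_one_div_of_le (by positivity)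
          exact_mod_cast add_le_add_left (Nat.cast_le.mpr hij) 1
        linarith))
    rw [hUnion] at htend
    have hlim : Pt (Set.Iio rt) ≤ ENNReal.ofReal α :=
      le_of_tendsto' htend (fun k => hstep _ (by
        have : (0:ℝ) < 1/(k+1) := by positivity
        linarith))
    rw [← ENNReal.le_ofReal_iff_toReal_le (hPtfin _) hα0.le]
    exact hlim
  -- Pt-integral minimality
  have hGmin : ∀ r : ℝ, ∫ s, quantileLoss α rt s ∂Pt ≤ ∫ s, quantileLoss α r s ∂Pt := by
    intro r
    rcases le_or_gt rt r with hcase | hcase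
    · -- rt ≤ r
      have hptwise : ∀ s, quantileLoss α rt s
          + (r - rt) * ((Set.Iic rt).indicator (fun _ => (1:ℝ)) s - α)
            ≤ quantileLoss α r s := fun s => quantileLoss_key_ge α rt r s hcase
      have hintInd : Integrable ((Set.Iic rt).indicator (fun _ => (1:ℝ))) Pt :=
        (integrable_const (1:ℝ)).indicator measurableSet_Iic
      have hintLHS : Integrable (fun s => quantileLoss α rt s
          + (r - rt) * ((Set.Iic rt).indicator (fun _ => (1:ℝ)) s - α)) Pt :=
        (hintPt rt).add (((hintInd.sub (integrable_const α)).const_mul (r - rt)))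
      have h1 := integral_mono hintLHS (hintPt r) hptwise
      have hint2 : Integrable (fun s => (r - rt) * ((Set.Iic rt).indicator (fun _ => (1:ℝ)) s - α)) Pt := by
        apply Integrable.const_mul
        exact hintInd.sub (integrable_const α)
      have h2 : ∫ s, (quantileLoss α rt s
          + (r - rt) * ((Set.Iic rt).indicator (fun _ => (1:ℝ)) s - α)) ∂Pt
          = (∫ s, quantileLoss α rt s ∂Pt)
            + (r - rt) * ((Pt (Set.Iic rt)).toReal - α) := by
        rw [integral_add (hintPt rt) hint2, integral_const_mul]
        have h3 : ∫ s, ((Set.Iic rt).indicator (fun _ => (1:ℝ)) s - α) ∂Pt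
            = (Pt (Set.Iic rt)).toReal - α := by
          rw [integral_sub hintInd (integrable_const α),
            integral_indicator_const _ measurableSet_Iic, integral_const]
          simp [hPtuniv, Measure.real_def]
        rw [h3]
      rw [h2] at h1
      nlinarith
    · -- r < rt
      have hptwise : ∀ s, quantileLoss α rt s
          + (rt - r) * (α - (Set.Iio rt).indicator (fun _ => (1:ℝ)) s)
            ≤ quantileLoss α r s := fun s => quantileLoss_key_le α rt r s hcase.le
      have hintInd : Integrable ((Set.Iio rt).indicator (fun _ => (1:ℝ))) Pt :=
        (integrable_const (1:ℝ)).indicator measurableSet_Iio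
      have hintLHS : Integrable (fun s => quantileLoss α rt s
          + (rt - r) * (α - (Set.Iio rt).indicator (fun _ => (1:ℝ)) s)) Pt :=
        (hintPt rt).add ((((integrable_const α).sub hintInd).const_mul (rt - r)))
      have h1 := integral_mono hintLHS (hintPt r) hptwise
      have hint2 : Integrable (fun s => (rt - r) * (α - (Set.Iio rt).indicator (fun _ => (1:ℝ)) s)) Pt := by
        apply Integrable.const_mul
        exact (integrable_const α).sub hintInd
      have h2 : ∫ s, (quantileLoss α rt s
          + (rt - r) * (α - (Set.Iio rt).indicator (fun _ => (1:ℝ)) s)) ∂Pt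
          = (∫ s, quantileLoss α rt s ∂Pt)
            + (rt - r) * (α - (Pt (Set.Iio rt)).toReal) := by
        rw [integral_add (hintPt rt) hint2, integral_const_mul]
        have h3 : ∫ s, (α - (Set.Iio rt).indicator (fun _ => (1:ℝ)) s) ∂Pt
            = α - (Pt (Set.Iio rt)).toReal := by
          rw [integral_sub (integrable_const α) hintInd,
            integral_indicator_const _ measurableSet_Iio, integral_const]
          simp [hPtuniv, Measure.real_def]
        rw [h3]
      rw [h2] at h1
      nlinarith
  -- conclusion
  intro r _
  simp only [Set.mem_setOf_eq]
  have hrw : ∀ x : ℝ, lam * n / (1 - lam) * (∫ s, quantileLoss α x s ∂P0)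
      + ∑ i : Fin n, quantileLoss α x (rs i)
      = (n / (1 - lam)) * ∫ s, quantileLoss α x s ∂Pt := by
    intro x
    rw [hdecomp x]
    field_simp
  rw [hrw rt, hrw r]
  have hc : (0:ℝ) ≤ n / (1 - lam) := by positivity
  exact mul_le_mul_of_nonneg_left (hGmin r) hc
end

section
/- FTRL one-step inequality: Let ψ ≥ 0 be convex, h_{t+1} ≥ h_t > 0, and let l_t be convex and 1-Lipschitz. Define F_t(r) = h_t ψ(r) + Σ_{i<t} l_i(r), with minimizer r_t, and suppose F_t is μ_t h_t-strongly convex on the segment between r_t and the minimizer of F_t + l_t. Then F_t(r_t) − F_{t+1}(r_{t+1}) + l_t(r_t) ≤ 1/(2 h_t μ_t). -/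
theorem ftrl_one_step_inequality
    (ψ : ℝ → ℝ) (hψconv : ConvexOn ℝ Set.univ ψ) (hψnonneg : ∀ r, 0 ≤ ψ r)
    (l : ℕ → ℝ → ℝ) (hlconv : ∀ i, ConvexOn ℝ Set.univ (l i))
    (hllip : ∀ i, LipschitzWith 1 (l i))
    (t : ℕ) (h : ℕ → ℝ) (hpos : 0 < h t) (hmono : h t ≤ h (t + 1))
    (μ : ℝ) (hμ : 0 < μ)
    (F : ℕ → ℝ → ℝ)
    (hF : ∀ u r, F u r = h u * ψ r + ∑ i ∈ Finset.range u, l i r)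
    (rt : ℝ) (hrt : IsMinOn (F t) Set.univ rt)
    (rt1 : ℝ) (hrt1 : IsMinOn (F (t + 1)) Set.univ rt1)
    (m : ℝ) (hm : IsMinOn (fun r => F t r + l t r) Set.univ m)
    (hsc : StrongConvexOn (segment ℝ rt m) (Real.toNNReal (μ * h t)) (F t)) :
    F t rt - F (t + 1) rt1 + l t rt ≤ 1 / (2 * h t * μ) := by
  set c : ℝ := μ * h t with hc_def
  have hc : 0 < c := mul_pos hμ hpos
  set d : ℝ := ‖rt - m‖ with hd_def
  have hd0 : 0 ≤ d := norm_nonneg _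
  have hcoe : ((Real.toNNReal (μ * h t)) : ℝ) = c := Real.coe_toNNReal _ hc.le
  -- Step 1: F t rt + c/2 * d^2 ≤ F t m
  have hstep : ∀ a ∈ Set.Ioo (0:ℝ) 1, F t rt + a * (c / 2 * d ^ 2) ≤ F t m := by
    rintro a ⟨ha0, ha1⟩
    have hb0 : (0:ℝ) ≤ 1 - a := by linarith
    have hsc' := hsc.2 (left_mem_segment ℝ rt m) (right_mem_segment ℝ rt m)
      ha0.le hb0 (by ring)
    simp only [smul_eq_mul, hcoe, Real.coe_toNNReal _ hc.le, ← hd_def] at hsc'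
    have hmin := isMinOn_iff.mp hrt (a * rt + (1 - a) * m) (Set.mem_univ _)
    have h1a : 0 < 1 - a := by linarith
    nlinarith [hsc', hmin, h1a]
  have key : F t rt + c / 2 * d ^ 2 ≤ F t m := by
    have hlim : Filter.Tendsto (fun a : ℝ => F t rt + a * (c / 2 * d ^ 2))
        (nhdsWithin 1 (Set.Iio 1)) (nhds (F t rt + 1 * (c / 2 * d ^ 2))) := by
      apply Filter.Tendsto.mono_left _ nhdsWithin_le_nhds
      exact (Continuous.tendsto (by continuity) 1)
    have hev : ∀ᶠ a in nhdsWithin (1:ℝ) (Set.Iio 1),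
        F t rt + a * (c / 2 * d ^ 2) ≤ F t m := by
      filter_upwards [Ioo_mem_nhdsLT_of_mem (Set.right_mem_Ioc.mpr one_pos)] with a ha
        using hstep a ha
    have := le_of_tendsto hlim hev
    linarith
  -- Step 2: Lipschitz
  have hlip : l t rt - l t m ≤ d := by
    have := (hllip t).dist_le_mul rt m
    rw [NNReal.coe_one, one_mul] at this
    calc l t rt - l t m ≤ |l t rt - l t m| := le_abs_self _
      _ = dist (l t rt) (l t m) := (Real.dist_eq _ _).symm
      _ ≤ dist rt m := this
      _ = d := by rw [hd_def, Real.dist_eq]; rfl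
  -- Step 3: F (t+1) rt1 ≥ F t m + l t m
  have hstep3 : F t m + l t m ≤ F (t + 1) rt1 := by
    have h1 : F t m + l t m ≤ F t rt1 + l t rt1 :=
      isMinOn_iff.mp hm rt1 (Set.mem_univ _)
    have h2 : F t rt1 + l t rt1 ≤ F (t + 1) rt1 := by
      rw [hF t rt1, hF (t + 1) rt1, Finset.sum_range_succ]
      have := hψnonneg rt1
      nlinarith
    linarith
  -- Combine
  have hquad : d - c / 2 * d ^ 2 ≤ 1 / (2 * c) := by
    rw [le_div_iff₀ (by positivity : (0:ℝ) < 2 * c)]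
    nlinarith [sq_nonneg (c * d - 1)]
  have : 1 / (2 * h t * μ) = 1 / (2 * c) := by rw [hc_def]; ring_nf
  rw [this]
  linarith
end

section
/- Regret bound with uniform prior: Let R > 0, t ↦ r*_t ∈ [0, R], α ∈ [0,1], and let r_t(α) be the α-quantile of P_t = (1/√t) P_0 + (1 − 1/√t) \bar{P}(r*_{1:t−1}) with P_0 uniform on [0, R]. Then there is an absolute constant C such that for all T, Σ_{t=1}^T l_α(r_t(α), r*_t) − Σ_{t=1}^T l_α(q_α(r*_{1:T}), r*_t) ≤ C R √T. -/
open MeasureTheory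

/-! ### Auxiliary definitions -/

/-- number of the first `k` points that are `≤ u` -/
noncomputable def qlN (ys : ℕ → ℝ) (k : ℕ) (u : ℝ) : ℝ :=
  ∑ i ∈ Finset.range k, if ys i ≤ u then 1 else 0

/-- number of the first `k` points that are `< u` -/
noncomputable def qlM (ys : ℕ → ℝ) (k : ℕ) (u : ℝ) : ℝ :=
  ∑ i ∈ Finset.range k, if ys i < u then 1 else 0

/-- expected pinball loss against the uniform distribution on `[0,R]`, times `R` -/
noncomputable def qlU (α R x : ℝ) : ℝ := ((1-α)*x^2 + α*(R-x)^2)/(2*R)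

lemma qlN_nonneg (ys : ℕ → ℝ) (k : ℕ) (u : ℝ) : 0 ≤ qlN ys k u := by
  unfold qlN; apply Finset.sum_nonneg; intro i _; split_ifs <;> norm_num

/-! ### Pinball loss basics -/

lemma ql_nonneg {α x y : ℝ} (h0 : 0 ≤ α) (h1 : α ≤ 1) : 0 ≤ quantileLoss α x y := by
  unfold quantileLoss; split_ifs with h <;> nlinarith

lemma ql_subgrad_right {α x z y : ℝ} (h0 : 0 ≤ α) (h1 : α ≤ 1) :
    quantileLoss α z y + ((if y ≤ z then (1:ℝ) else 0) - α) * (x - z) ≤ quantileLoss α x y := by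
  unfold quantileLoss; split_ifs with h h' h' <;> nlinarith

lemma ql_subgrad_left {α x z y : ℝ} (h0 : 0 ≤ α) (h1 : α ≤ 1) :
    quantileLoss α z y + ((if y < z then (1:ℝ) else 0) - α) * (x - z) ≤ quantileLoss α x y := by
  unfold quantileLoss; split_ifs with h h' h' <;> nlinarith

lemma ql_diff_le {α x z y : ℝ} (h0 : 0 ≤ α) (h1 : α ≤ 1) :
    quantileLoss α x y - quantileLoss α z y ≤ |x - z| := by
  have h2 := le_abs_self (x - z)
  have h3 := neg_abs_le (x - z)
  unfold quantileLoss; split_ifs with h h' h' <;> nlinarith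

/-! ### Properties of `qlU` -/

lemma qlU_nonneg {α R x : ℝ} (hR : 0 < R) (h0 : 0 ≤ α) (h1 : α ≤ 1) : 0 ≤ qlU α R x := by
  have : 0 ≤ (1-α)*x^2 + α*(R-x)^2 := by nlinarith [sq_nonneg x, sq_nonneg (R-x)]
  unfold qlU
  positivity

lemma qlU_le {α R x : ℝ} (hR : 0 < R) (h0 : 0 ≤ α) (h1 : α ≤ 1) (hx0 : 0 ≤ x) (hxR : x ≤ R) :
    qlU α R x ≤ R/2 := by
  unfold qlU
  rw [div_le_div_iff₀ (by linarith) (by norm_num)]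
  nlinarith [sq_nonneg x, sq_nonneg (R - x)]

lemma qlU_taylor {α R x z : ℝ} (hR : 0 < R) :
    qlU α R x = qlU α R z + (z/R - α)*(x-z) + (x-z)^2/(2*R) := by
  unfold qlU; field_simp; ring

lemma qlU_lip {α R x z : ℝ} (hR : 0 < R) (h0 : 0 ≤ α) (h1 : α ≤ 1)
    (hx0 : 0 ≤ x) (hxR : x ≤ R) (hz0 : 0 ≤ z) (hzR : z ≤ R) :
    |qlU α R x - qlU α R z| ≤ |x - z| := by
  have hab : qlU α R x - qlU α R z = (x - z) * (x + z - 2*R*α) / (2*R) := by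
    unfold qlU; field_simp; ring
  rw [hab, abs_div, abs_mul, abs_of_pos (by linarith : (0:ℝ) < 2*R)]
  rw [div_le_iff₀ (by linarith)]
  have : |x + z - 2*R*α| ≤ 2*R := by
    rw [abs_le]; constructor <;> nlinarith
  nlinarith [abs_nonneg (x - z), abs_nonneg (x + z - 2*R*α)]

/-! ### Sum of `1/√t` -/

lemma sum_one_div_sqrt_le (T : ℕ) :
    ∑ i ∈ Finset.range T, 1/Real.sqrt (i+1) ≤ 2*Real.sqrt T := by
  induction T with
  | zero => simp
  | succ n ih =>
    rw [Finset.sum_range_succ]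
    have ha : Real.sqrt n ≥ 0 := Real.sqrt_nonneg _
    have hb : Real.sqrt (n+1) > 0 := Real.sqrt_pos.2 (by positivity)
    have ha2 : Real.sqrt n ^ 2 = (n:ℝ) := Real.sq_sqrt (by positivity)
    have hb2 : Real.sqrt (n+1) ^ 2 = (n:ℝ)+1 := by
      rw [Real.sq_sqrt (by positivity)]
    have key : 1/Real.sqrt (n+1) ≤ 2*Real.sqrt (n+1) - 2*Real.sqrt n := by
      rw [div_le_iff₀ hb]
      nlinarith [sq_nonneg (Real.sqrt (n+1) - Real.sqrt n)]
    have hcast : ((n:ℝ)+1) = ((n+1 : ℕ) : ℝ) := by push_cast; ring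
    calc ∑ i ∈ Finset.range n, 1/Real.sqrt (i+1) + 1/Real.sqrt (n+1)
        ≤ 2*Real.sqrt n + (2*Real.sqrt (n+1) - 2*Real.sqrt n) := by
          push_cast at ih ⊢; linarith
      _ = 2*Real.sqrt ((n:ℝ)+1) := by ring
      _ = 2*Real.sqrt ((n+1:ℕ):ℝ) := by rw [hcast]

/-! ### Conversion between CDF form and potential form -/

lemma hconv_right (t : ℕ) (ht : 1 ≤ t) (α c n : ℝ) (hn : 0 ≤ n)
    (h : α ≤ (1/Real.sqrt t)*c + ((1 - 1/Real.sqrt t)/((t:ℝ)-1))*n) :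
    ((Real.sqrt t + 1) + ((t:ℝ)-1))*α ≤ (Real.sqrt t + 1)*c + n := by
  by_cases ht1 : t = 1
  · subst ht1; norm_num [Real.sqrt_one] at h ⊢; linarith
  · have ht2 : 2 ≤ t := by omega
    have ht2' : (2:ℝ) ≤ (t:ℝ) := by exact_mod_cast ht2
    set s := Real.sqrt t with hs
    have hs2 : s*s = (t:ℝ) := Real.mul_self_sqrt (by positivity)
    have hs1 : 1 < s := by nlinarith [Real.sqrt_nonneg (t:ℝ)]
    set d := (t:ℝ) - 1 with hd
    have hdpos : 0 < d := by simp [hd]; linarith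
    have h2 : s*d*α ≤ d*c + (s-1)*n := by
      have h3 := mul_le_mul_of_nonneg_left h (by positivity : (0:ℝ) ≤ s*d)
      have heq : s*d*((1/s)*c + ((1 - 1/s)/d)*n) = d*c + (s-1)*n := by
        field_simp
      linarith [heq ▸ h3]
    have hpos : (0:ℝ) < s - 1 := by linarith
    have hd2 : (s-1)*(s+1) = d := by rw [hd, ← hs2]; ring
    have e1 : (s-1)*((s+1+d)*α) = s*d*α := by rw [← hd2]; ring
    have e2 : (s-1)*((s+1)*c+n) = d*c + (s-1)*n := by rw [← hd2]; ring
    rw [← mul_le_mul_iff_right₀ hpos]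
    rw [e1, e2]; linarith

lemma hconv_left (t : ℕ) (ht : 1 ≤ t) (α c n : ℝ) (hn1 : t = 1 → n = 0)
    (h : (1/Real.sqrt t)*c + ((1 - 1/Real.sqrt t)/((t:ℝ)-1))*n ≤ α) :
    (Real.sqrt t + 1)*c + n ≤ ((Real.sqrt t + 1) + ((t:ℝ)-1))*α := by
  by_cases ht1 : t = 1
  · have hn0 : n = 0 := hn1 ht1
    subst ht1; norm_num [Real.sqrt_one, hn0] at h ⊢; linarith
  · have ht2 : 2 ≤ t := by omega
    have ht2' : (2:ℝ) ≤ (t:ℝ) := by exact_mod_cast ht2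
    set s := Real.sqrt t with hs
    have hs2 : s*s = (t:ℝ) := Real.mul_self_sqrt (by positivity)
    have hs1 : 1 < s := by nlinarith [Real.sqrt_nonneg (t:ℝ)]
    set d := (t:ℝ) - 1 with hd
    have hdpos : 0 < d := by simp [hd]; linarith
    have h2 : d*c + (s-1)*n ≤ s*d*α := by
      have h3 := mul_le_mul_of_nonneg_left h (by positivity : (0:ℝ) ≤ s*d)
      have heq : s*d*((1/s)*c + ((1 - 1/s)/d)*n) = d*c + (s-1)*n := by
        field_simp
      linarith [heq ▸ h3]
    have hpos : (0:ℝ) < s - 1 := by linarith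
    have hd2 : (s-1)*(s+1) = d := by rw [hd, ← hs2]; ring
    have e1 : (s-1)*((s+1+d)*α) = s*d*α := by rw [← hd2]; ring
    have e2 : (s-1)*((s+1)*c+n) = d*c + (s-1)*n := by rw [← hd2]; ring
    rw [← mul_le_mul_iff_right₀ hpos]
    rw [e1, e2]; linarith

lemma sqrt_coeff_nonneg {t : ℕ} (ht : 1 ≤ t) :
    0 ≤ (1 - 1/Real.sqrt t)/((t:ℝ)-1) := by
  have h1 : (1:ℝ) ≤ Real.sqrt t := by
    rw [show (1:ℝ) = Real.sqrt 1 by simp]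
    exact Real.sqrt_le_sqrt (by exact_mod_cast ht)
  have h2 : 1/Real.sqrt t ≤ 1 := by
    rw [div_le_one (by linarith)]; exact h1
  have h3 : (1:ℝ) ≤ (t:ℝ) := by exact_mod_cast ht
  apply div_nonneg <;> linarith

/-! ### The quantile of a (sub)mixture of uniform and empirical distributions -/

lemma quantile_bounds (R α w c : ℝ) (hR : 0 < R) (hα0 : 0 ≤ α) (hα1 : α ≤ 1)
    (hw : 0 ≤ w) (hc : 0 ≤ c) (k : ℕ) (ys : ℕ → ℝ) (hys : ∀ i, 0 ≤ ys i ∧ ys i ≤ R)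
    (htot : w + c*k = 1) (F : ℝ → ℝ)
    (hF : ∀ u, F u = w * (min (max u 0) R / R) + c * qlN ys k u)
    (x : ℝ) (hx : x = sInf {u : ℝ | α ≤ F u}) :
    (0 ≤ x ∧ x ≤ R) ∧ (α ≤ w*(x/R) + c * qlN ys k x) ∧
      (0 < x → w*(x/R) + c * qlM ys k x ≤ α) := by
  have hNR : qlN ys k R = k := by
    unfold qlN
    rw [Finset.sum_congr rfl (fun i _ => if_pos (hys i).2), Finset.sum_const,
      Finset.card_range]
    simp
  have hFR : α ≤ F R := by
    rw [hF, hNR]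
    have h1 : min (max R 0) R = R := by
      rw [max_eq_left hR.le, min_self]
    rw [h1, div_self hR.ne']
    linarith
  have hmemR : R ∈ {u : ℝ | α ≤ F u} := hFR
  rcases eq_or_lt_of_le hα0 with hα | hα
  · -- α = 0
    have hSuniv : {u : ℝ | α ≤ F u} = Set.univ := by
      ext u
      simp only [Set.mem_setOf_eq, Set.mem_univ, iff_true]
      rw [hF, ← hα]
      have h1 : (0:ℝ) ≤ min (max u 0) R := le_min (le_max_right u 0) hR.le
      have h2 := qlN_nonneg ys k u
      positivity
    have hx0 : x = 0 := by
      rw [hx, hSuniv, Real.sInf_of_not_bddBelow not_bddBelow_univ]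
    subst hx0
    refine ⟨⟨le_refl 0, hR.le⟩, ?_, by intro h; exact absurd h (lt_irrefl 0)⟩
    rw [← hα]
    have h2 := qlN_nonneg ys k (0:ℝ)
    positivity
  · -- 0 < α
    set S := {u : ℝ | α ≤ F u} with hS
    have hlb : ∀ u ∈ S, (0:ℝ) ≤ u := by
      intro u hu
      by_contra hneg
      push_neg at hneg
      have hFu : F u = 0 := by
        rw [hF]
        have h1 : max u 0 = 0 := max_eq_right hneg.le
        have h2 : qlN ys k u = 0 := by
          unfold qlN
          apply Finset.sum_eq_zero
          intro i _
          rw [if_neg (by linarith [(hys i).1])]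
        rw [h1, h2, min_eq_left hR.le]
        ring
      have : α ≤ (0:ℝ) := by rw [← hFu]; exact hu
      linarith
    have hbdd : BddBelow S := ⟨0, fun u hu => hlb u hu⟩
    have hne : S.Nonempty := ⟨R, hmemR⟩
    have hx0 : 0 ≤ x := by rw [hx]; exact le_csInf hne hlb
    have hxR : x ≤ R := by rw [hx]; exact csInf_le hbdd hmemR
    -- finite set of candidate jump points
    set Fs : Finset ℝ := insert (0:ℝ) ((Finset.range k).image ys) with hFs
    refine ⟨⟨hx0, hxR⟩, ?_, ?_⟩
    · -- right bound
      apply le_of_forall_pos_le_add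
      intro ε hε
      set A : Finset ℝ := Fs.filter (fun v => x < v) with hA
      have hgpos : ∀ h : A.Nonempty, 0 < A.min' h - x := by
        intro h
        have hm := A.min'_mem h
        have := (Finset.mem_filter.mp hm).2
        linarith
      set g : ℝ := if h : A.Nonempty then A.min' h - x else 1 with hg
      have hgpos' : 0 < g := by
        rw [hg]; split_ifs with h
        · exact hgpos h
        · norm_num
      set ε' : ℝ := min (ε*R/(w+1)) g with hε'
      have hε'pos : 0 < ε' := lt_min (by positivity) hgpos'
      obtain ⟨u, huS, hult⟩ := Real.lt_sInf_add_pos hne hε'pos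
      rw [← hx] at hult
      have hxu : x ≤ u := by rw [hx]; exact csInf_le hbdd huS
      have hNu : qlN ys k u = qlN ys k x := by
        unfold qlN
        apply Finset.sum_congr rfl
        intro i hi
        congr 1
        apply propext
        constructor
        · intro hiu
          by_contra hix
          push_neg at hix
          have hmem : ys i ∈ A := by
            rw [hA, Finset.mem_filter, hFs]
            exact ⟨Finset.mem_insert_of_mem (Finset.mem_image_of_mem ys hi), hix⟩
          have hAne : A.Nonempty := ⟨ys i, hmem⟩
          have h1 : A.min' hAne ≤ ys i := A.min'_le _ hmem
          have h2 : g ≤ A.min' hAne - x := by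
            rw [hg, dif_pos hAne]
          have h3 : ε' ≤ g := min_le_right _ _
          linarith
        · intro hix; linarith
      have huS' : α ≤ w * (min (max u 0) R / R) + c * qlN ys k u := by
        rw [← hF]; exact huS
      have h1 : max u 0 = u := max_eq_left (le_trans hx0 hxu)
      rw [h1, hNu] at huS'
      have h2 : min u R ≤ u := min_le_left _ _
      have h3 : w * (min u R / R) ≤ w * (u / R) := by
        gcongr
      have h4 : u < x + ε' := hult
      have h5 : ε' ≤ ε*R/(w+1) := min_le_left _ _
      have h6 : w * (u/R) ≤ w * ((x+ε')/R) := by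
        gcongr
      have h5' : ε'*(w+1) ≤ ε*R := by
        rw [← le_div_iff₀ (by positivity : (0:ℝ) < w+1)]
        exact h5
      have h7 : w*ε' ≤ ε*R := by nlinarith [hε'pos.le]
      have hfin : w*((x+ε')/R) = w*(x/R) + (w*ε')/R := by field_simp
      have h8 : (w*ε')/R ≤ ε := by rw [div_le_iff₀ hR]; linarith
      linarith
    · -- left bound
      intro hxpos
      apply le_of_forall_pos_le_add
      intro ε hε
      set B : Finset ℝ := Fs.filter (fun v => v < x) with hB
      have hBne : B.Nonempty := by
        refine ⟨0, ?_⟩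
        rw [hB, Finset.mem_filter, hFs]
        exact ⟨Finset.mem_insert_self _ _, hxpos⟩
      set u0 : ℝ := B.max' hBne with hu0
      have hu0lt : u0 < x := by
        have hm := B.max'_mem hBne
        exact (Finset.mem_filter.mp hm).2
      have hu0ge0 : 0 ≤ u0 := by
        apply B.le_max'
        rw [hB, Finset.mem_filter, hFs]
        exact ⟨Finset.mem_insert_self _ _, hxpos⟩
      set ε'' : ℝ := ε*R/(w+1) with hε''
      have hε''pos : 0 < ε'' := by positivity
      set u : ℝ := max u0 (x - ε'') with hu
      have hultx : u < x := by
        rw [hu]; apply max_lt hu0lt; linarith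
      have hu0' : 0 ≤ u := le_trans hu0ge0 (le_max_left _ _)
      have huR : u ≤ R := by linarith
      have hunotS : u ∉ S := by
        intro huS
        have : x ≤ u := by rw [hx]; exact csInf_le hbdd huS
        linarith
      have hFu : F u < α := by
        by_contra hc'
        push_neg at hc'
        exact hunotS hc'
      rw [hF] at hFu
      have h1 : max u 0 = u := max_eq_left hu0'
      have h2 : min u R = u := min_eq_left huR
      rw [h1, h2] at hFu
      have hMN : qlM ys k x ≤ qlN ys k u := by
        unfold qlM qlN
        apply Finset.sum_le_sum
        intro i hi
        split_ifs with ha hb hb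
        · norm_num
        · exfalso
          apply hb
          have hmem : ys i ∈ B := by
            rw [hB, Finset.mem_filter, hFs]
            exact ⟨Finset.mem_insert_of_mem (Finset.mem_image_of_mem ys hi), ha⟩
          calc ys i ≤ u0 := B.le_max' _ hmem
            _ ≤ u := le_max_left _ _
        · norm_num
        · norm_num
      have h3 : w * ((x - ε'')/R) ≤ w * (u/R) := by
        have hxe : x - ε'' ≤ u := le_max_right u0 _
        gcongr
      have h4 : w*(x/R) + c*qlM ys k x ≤ w*(u/R) + c*qlN ys k u + w*ε''/R := by
        have h5 : w*(x/R) = w*((x-ε'')/R) + w*ε''/R := by field_simp; ring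
        have h6 : c*qlM ys k x ≤ c*qlN ys k u := mul_le_mul_of_nonneg_left hMN hc
        linarith
      have h7 : w*ε''/R ≤ ε := by
        rw [div_le_iff₀ hR]
        have h5' : ε''*(w+1) = ε*R := by rw [hε'']; field_simp
        nlinarith [hε''pos.le]
      linarith

/-! ### Computing the CDF of the mixture measure -/

lemma measure_Iic_eq (R : ℝ) (hR : 0 < R) (rs : ℕ → ℝ) (P0 : Measure ℝ)
    (hP0 : P0 = (ENNReal.ofReal R)⁻¹ • volume.restrict (Set.Icc 0 R))
    (μ : Measure ℝ) (t : ℕ) (ht : 1 ≤ t)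
    (hμ : μ = ENNReal.ofReal (1 / Real.sqrt t) • P0
      + ENNReal.ofReal ((1 - 1 / Real.sqrt t) / ((t : ℝ) - 1)) •
          ∑ i ∈ Finset.range (t - 1), Measure.dirac (rs (i + 1)))
    (u : ℝ) :
    (μ (Set.Iic u)).toReal
      = (1/Real.sqrt t) * (min (max u 0) R / R)
        + ((1 - 1/Real.sqrt t)/((t:ℝ)-1)) * qlN (fun i => rs (i+1)) (t-1) u := by
  have hw0 : (0:ℝ) ≤ 1/Real.sqrt t := by positivity
  have hc0 := sqrt_coeff_nonneg ht
  have hP0app : P0 (Set.Iic u) = ENNReal.ofReal (min (max u 0) R / R) := by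
    rw [hP0, Measure.smul_apply, smul_eq_mul,
      Measure.restrict_apply measurableSet_Iic]
    rcases le_or_gt 0 u with hu | hu
    · have hset : Set.Iic u ∩ Set.Icc 0 R = Set.Icc 0 (min u R) := by
        ext v
        simp only [Set.mem_inter_iff, Set.mem_Iic, Set.mem_Icc, le_min_iff]
        constructor
        · rintro ⟨h1, h2, h3⟩; exact ⟨h2, h1, h3⟩
        · rintro ⟨h1, h2, h3⟩; exact ⟨h2, h1, h3⟩
      rw [hset, Real.volume_Icc, max_eq_left hu]
      rw [← ENNReal.ofReal_inv_of_pos hR, ← ENNReal.ofReal_mul (by positivity)]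
      congr 1
      rw [div_eq_mul_inv, mul_comm]
      congr 1
      simp
    · have hset : Set.Iic u ∩ Set.Icc 0 R = ∅ := by
        ext v
        simp only [Set.mem_inter_iff, Set.mem_Iic, Set.mem_Icc, Set.mem_empty_iff_false,
          iff_false, not_and]
        intro h1 h2; linarith
      rw [hset, measure_empty, max_eq_right hu.le, min_eq_left hR.le]
      simp
  have hdirac : (∑ i ∈ Finset.range (t-1), Measure.dirac (rs (i+1))) (Set.Iic u)
      = ENNReal.ofReal (qlN (fun i => rs (i+1)) (t-1) u) := by
    rw [Measure.finset_sum_apply]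
    unfold qlN
    rw [ENNReal.ofReal_sum_of_nonneg (fun i _ => by split_ifs <;> norm_num)]
    apply Finset.sum_congr rfl
    intro i _
    rw [Measure.dirac_apply' _ measurableSet_Iic, Set.indicator_apply]
    split_ifs with h h' h'
    · simp
    · exact absurd h h'
    · exact absurd h' h
    · simp
  have hclamp : (0:ℝ) ≤ min (max u 0) R / R :=
    div_nonneg (le_min (le_max_right u 0) hR.le) hR.le
  have hA : (0:ℝ) ≤ 1/Real.sqrt t * (min (max u 0) R / R) := mul_nonneg hw0 hclamp
  have hB : (0:ℝ) ≤ ((1 - 1/Real.sqrt t)/((t:ℝ)-1)) * qlN (fun i => rs (i+1)) (t-1) u :=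
    mul_nonneg hc0 (qlN_nonneg _ _ _)
  rw [hμ, Measure.add_apply, Measure.smul_apply, Measure.smul_apply, smul_eq_mul,
    smul_eq_mul, hP0app, hdirac,
    ← ENNReal.ofReal_mul hw0, ← ENNReal.ofReal_mul hc0,
    ← ENNReal.ofReal_add hA hB,
    ENNReal.toReal_ofReal (add_nonneg hA hB)]

/-! ### The quantile minimizes the regularized cumulative loss (with strong convexity) -/

lemma qlG_min (R α : ℝ) (hR : 0 < R) (hα0 : 0 ≤ α) (hα1 : α ≤ 1)
    (ys : ℕ → ℝ) (t : ℕ) (ht : 1 ≤ t) (xt : ℝ) (hxt0 : 0 ≤ xt) (hxtR : xt ≤ R)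
    (hDr : ((Real.sqrt t + 1) + ((t:ℝ)-1))*α ≤ (Real.sqrt t + 1)*(xt/R) + qlN ys (t-1) xt)
    (hDl : 0 < xt → (Real.sqrt t + 1)*(xt/R) + qlM ys (t-1) xt ≤ ((Real.sqrt t + 1) + ((t:ℝ)-1))*α)
    (x : ℝ) (hx0 : 0 ≤ x) (hxR : x ≤ R) :
    (Real.sqrt t + 1) * qlU α R xt + (∑ i ∈ Finset.range (t-1), quantileLoss α xt (ys i))
      + (Real.sqrt t + 1) * (x - xt)^2/(2*R)
    ≤ (Real.sqrt t + 1) * qlU α R x + ∑ i ∈ Finset.range (t-1), quantileLoss α x (ys i) := by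
  have hb : (0:ℝ) < Real.sqrt t + 1 := by positivity
  set b := Real.sqrt t + 1 with hbdef
  have hcast : ((t-1:ℕ):ℝ) = (t:ℝ) - 1 := by
    have : (1:ℕ) ≤ t := ht
    push_cast [this]; ring
  have hU : qlU α R x = qlU α R xt + (xt/R - α)*(x-xt) + (x-xt)^2/(2*R) := qlU_taylor hR
  rcases le_or_gt xt x with hcase | hcase
  · -- x ≥ xt : use right subgradient
    have hsum : (∑ i ∈ Finset.range (t-1), quantileLoss α xt (ys i))
        + (qlN ys (t-1) xt - ((t:ℝ)-1)*α) * (x - xt)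
        ≤ ∑ i ∈ Finset.range (t-1), quantileLoss α x (ys i) := by
      have h1 : ∀ i ∈ Finset.range (t-1),
          quantileLoss α xt (ys i) + ((if ys i ≤ xt then (1:ℝ) else 0) - α) * (x - xt)
            ≤ quantileLoss α x (ys i) := fun i _ => ql_subgrad_right hα0 hα1
      have h2 := Finset.sum_le_sum h1
      rw [Finset.sum_add_distrib, ← Finset.sum_mul, Finset.sum_sub_distrib,
        Finset.sum_const, Finset.card_range, nsmul_eq_mul] at h2
      unfold qlN
      rw [hcast] at h2
      linarith [h2]
    have hD : 0 ≤ b*(xt/R) + qlN ys (t-1) xt - (b + ((t:ℝ)-1))*α := by linarith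
    have hprod : 0 ≤ (b*(xt/R) + qlN ys (t-1) xt - (b + ((t:ℝ)-1))*α) * (x - xt) :=
      mul_nonneg hD (by linarith)
    rw [hU]
    have hexp : (b*(xt/R) + qlN ys (t-1) xt - (b + ((t:ℝ)-1))*α) * (x - xt)
        = (b*(xt/R))*(x-xt) + (qlN ys (t-1) xt)*(x-xt) - (b + ((t:ℝ)-1))*α*(x-xt) := by ring
    have hexp2 : (qlN ys (t-1) xt - ((t:ℝ)-1)*α) * (x - xt)
        = (qlN ys (t-1) xt)*(x-xt) - ((t:ℝ)-1)*α*(x-xt) := by ring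
    have hgoal : b * (qlU α R xt + (xt/R - α)*(x-xt) + (x-xt)^2/(2*R))
        = b * qlU α R xt + (b*(xt/R))*(x-xt) - b*α*(x-xt) + b*(x-xt)^2/(2*R) := by ring
    rw [hgoal]
    rw [hexp] at hprod
    rw [hexp2] at hsum
    linarith [hprod, hsum]
  · -- x < xt : use left subgradient
    have hxtpos : 0 < xt := lt_of_le_of_lt hx0 hcase
    have hDl' := hDl hxtpos
    have hsum : (∑ i ∈ Finset.range (t-1), quantileLoss α xt (ys i))
        + (qlM ys (t-1) xt - ((t:ℝ)-1)*α) * (x - xt)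
        ≤ ∑ i ∈ Finset.range (t-1), quantileLoss α x (ys i) := by
      have h1 : ∀ i ∈ Finset.range (t-1),
          quantileLoss α xt (ys i) + ((if ys i < xt then (1:ℝ) else 0) - α) * (x - xt)
            ≤ quantileLoss α x (ys i) := fun i _ => ql_subgrad_left hα0 hα1
      have h2 := Finset.sum_le_sum h1
      rw [Finset.sum_add_distrib, ← Finset.sum_mul, Finset.sum_sub_distrib,
        Finset.sum_const, Finset.card_range, nsmul_eq_mul] at h2
      unfold qlM
      rw [hcast] at h2
      linarith [h2]
    have hD : b*(xt/R) + qlM ys (t-1) xt - (b + ((t:ℝ)-1))*α ≤ 0 := by linarith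
    have hprod : 0 ≤ (b*(xt/R) + qlM ys (t-1) xt - (b + ((t:ℝ)-1))*α) * (x - xt) := by
      have h := mul_nonneg (neg_nonneg.2 hD) (neg_nonneg.2 (show x - xt ≤ 0 by linarith))
      rw [neg_mul_neg] at h
      exact h
    rw [hU]
    have hexp : (b*(xt/R) + qlM ys (t-1) xt - (b + ((t:ℝ)-1))*α) * (x - xt)
        = (b*(xt/R))*(x-xt) + (qlM ys (t-1) xt)*(x-xt) - (b + ((t:ℝ)-1))*α*(x-xt) := by ring
    have hexp2 : (qlM ys (t-1) xt - ((t:ℝ)-1)*α) * (x - xt)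
        = (qlM ys (t-1) xt)*(x-xt) - ((t:ℝ)-1)*α*(x-xt) := by ring
    have hgoal : b * (qlU α R xt + (xt/R - α)*(x-xt) + (x-xt)^2/(2*R))
        = b * qlU α R xt + (b*(xt/R))*(x-xt) - b*α*(x-xt) + b*(x-xt)^2/(2*R) := by ring
    rw [hgoal]
    rw [hexp] at hprod
    rw [hexp2] at hsum
    linarith [hprod, hsum]

set_option maxHeartbeats 2000000 in
/-- Regret bound with the uniform prior: there is an absolute constant `C` such that
the Bayesian predictions `r_t(α)` (the α-quantiles of
`P_t = (1/√t)·P_0 + (1−1/√t)·\bar P(r*_{1:t−1})`, `P_0` uniform on `[0,R]`)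
satisfy `Σ l_α(r_t(α), r*_t) − Σ l_α(q_α(r*_{1:T}), r*_t) ≤ C R √T`. -/
theorem bayesian_cp_regret_uniform_prior :
    ∃ C : ℝ, 0 < C ∧
      ∀ (R : ℝ), 0 < R → ∀ (α : ℝ), α ∈ Set.Icc (0:ℝ) 1 →
      ∀ (rs : ℕ → ℝ), (∀ t, rs t ∈ Set.Icc (0:ℝ) R) →
      ∀ (P0 : Measure ℝ),
        P0 = (ENNReal.ofReal R)⁻¹ • volume.restrict (Set.Icc 0 R) →
      ∀ (Pt : ℕ → Measure ℝ),
        (∀ t : ℕ, 1 ≤ t →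
          Pt t = ENNReal.ofReal (1 / Real.sqrt t) • P0
            + ENNReal.ofReal ((1 - 1 / Real.sqrt t) / ((t : ℝ) - 1)) •
                ∑ i ∈ Finset.range (t - 1), Measure.dirac (rs (i + 1))) →
      ∀ (rt : ℕ → ℝ),
        (∀ t : ℕ, rt t = sInf {x : ℝ | α ≤ ((Pt t) (Set.Iic x)).toReal}) →
      ∀ (q : ℕ → ℝ),
        (∀ T : ℕ, q T = sInf {x : ℝ |
          α ≤ (1 / (T : ℝ)) * ∑ t ∈ Finset.range T,
              (if rs (t + 1) ≤ x then (1:ℝ) else 0)}) →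
      ∀ T : ℕ, 1 ≤ T →
        (∑ t ∈ Finset.range T, quantileLoss α (rt (t + 1)) (rs (t + 1)))
          - (∑ t ∈ Finset.range T, quantileLoss α (q T) (rs (t + 1)))
            ≤ C * R * Real.sqrt T := by
  refine ⟨10, by norm_num, ?_⟩
  intro R hR α hα rs hrs P0 hP0 Pt hPt rt hrt q hq T hT
  obtain ⟨hα0, hα1⟩ := hα
  have hysb : ∀ i : ℕ, 0 ≤ rs (i+1) ∧ rs (i+1) ≤ R := fun i => ⟨(hrs (i+1)).1, (hrs (i+1)).2⟩
  -- total mass computation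
  have htot : ∀ t:ℕ, 1 ≤ t →
      1/Real.sqrt t + ((1 - 1/Real.sqrt t)/((t:ℝ)-1))*((t-1:ℕ):ℝ) = 1 := by
    intro t ht
    by_cases h1 : t = 1
    · subst h1; norm_num [Real.sqrt_one]
    · have ht2 : 2 ≤ t := by omega
      have ht2' : (2:ℝ) ≤ (t:ℝ) := by exact_mod_cast ht2
      have hd : ((t:ℝ)-1) ≠ 0 := by linarith
      have hcast : ((t-1:ℕ):ℝ) = (t:ℝ)-1 := by
        have : (1:ℕ) ≤ t := ht
        push_cast [this]; ring
      have hs : (0:ℝ) < Real.sqrt t := Real.sqrt_pos.2 (by positivity)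
      rw [hcast, div_mul_cancel₀ _ hd]
      ring
  -- quantile properties of the predictions
  have hQB : ∀ t:ℕ, 1 ≤ t →
      (0 ≤ rt t ∧ rt t ≤ R) ∧
      (α ≤ (1/Real.sqrt t)*(rt t/R)
        + ((1 - 1/Real.sqrt t)/((t:ℝ)-1)) * qlN (fun i => rs (i+1)) (t-1) (rt t)) ∧
      (0 < rt t → (1/Real.sqrt t)*(rt t/R)
        + ((1 - 1/Real.sqrt t)/((t:ℝ)-1)) * qlM (fun i => rs (i+1)) (t-1) (rt t) ≤ α) := by
    intro t ht
    exact quantile_bounds R α (1/Real.sqrt t) ((1 - 1/Real.sqrt t)/((t:ℝ)-1)) hR hα0 hα1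
      (by positivity) (sqrt_coeff_nonneg ht) (t-1) (fun i => rs (i+1)) hysb (htot t ht)
      (fun u => ((Pt t) (Set.Iic u)).toReal)
      (fun u => measure_Iic_eq R hR rs P0 hP0 (Pt t) t ht (hPt t ht) u)
      (rt t) (hrt t)
  -- convert to the potential form
  have hDr : ∀ t:ℕ, 1 ≤ t → ((Real.sqrt t+1) + ((t:ℝ)-1))*α
      ≤ (Real.sqrt t+1)*(rt t/R) + qlN (fun i => rs (i+1)) (t-1) (rt t) := by
    intro t ht
    exact hconv_right t ht α (rt t/R) _ (qlN_nonneg _ _ _) (hQB t ht).2.1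
  have hDl : ∀ t:ℕ, 1 ≤ t → 0 < rt t →
      (Real.sqrt t+1)*(rt t/R) + qlM (fun i => rs (i+1)) (t-1) (rt t)
        ≤ ((Real.sqrt t+1)+((t:ℝ)-1))*α := by
    intro t ht hpos
    refine hconv_left t ht α (rt t/R) _ ?_ ((hQB t ht).2.2 hpos)
    intro h1; subst h1; simp [qlM]
  -- minimality of the prediction for the regularized cumulative loss
  have hGmin : ∀ t:ℕ, 1 ≤ t → ∀ x:ℝ, 0 ≤ x → x ≤ R →
      (Real.sqrt t + 1) * qlU α R (rt t)
        + (∑ i ∈ Finset.range (t-1), quantileLoss α (rt t) (rs (i+1)))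
        + (Real.sqrt t + 1) * (x - rt t)^2/(2*R)
      ≤ (Real.sqrt t + 1) * qlU α R x
        + ∑ i ∈ Finset.range (t-1), quantileLoss α x (rs (i+1)) := by
    intro t ht x hx0 hxR
    exact qlG_min R α hR hα0 hα1 (fun i => rs (i+1)) t ht (rt t)
      (hQB t ht).1.1 (hQB t ht).1.2 (hDr t ht) (hDl t ht) x hx0 hxR
  -- bounds for the empirical quantile q T
  have hqTb : 0 ≤ q T ∧ q T ≤ R := by
    have hTne : ((T:ℝ)) ≠ 0 := by
      have : (1:ℝ) ≤ (T:ℝ) := by exact_mod_cast hT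
      linarith
    have h := quantile_bounds R α 0 (1/(T:ℝ)) hR hα0 hα1 le_rfl (by positivity)
      T (fun i => rs (i+1)) hysb (by field_simp; norm_num)
      (fun u => (1 / (T : ℝ)) * ∑ t ∈ Finset.range T,
        (if rs (t + 1) ≤ u then (1:ℝ) else 0))
      (fun u => by simp only [qlN]; ring)
      (q T) (hq T)
    exact h.1
  -- stability of predictions
  have hstab : ∀ t:ℕ, 1 ≤ t → |rt t - rt (t+1)| ≤ 2*R/Real.sqrt t := by
    intro t ht
    have ht1 : 1 ≤ t+1 := by omega
    have hb1 := (hQB t ht).1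
    have hb2 := (hQB (t+1) ht1).1
    have h1 := hGmin t ht (rt (t+1)) hb2.1 hb2.2
    have h2 := hGmin (t+1) ht1 (rt t) hb1.1 hb1.2
    have hsplit : ∀ z:ℝ, ∑ i ∈ Finset.range ((t+1)-1), quantileLoss α z (rs (i+1))
        = (∑ i ∈ Finset.range (t-1), quantileLoss α z (rs (i+1)))
          + quantileLoss α z (rs ((t-1)+1)) := by
      intro z
      have he : (t+1)-1 = (t-1)+1 := by omega
      rw [he, Finset.sum_range_succ]
    rw [hsplit, hsplit] at h2
    obtain ⟨y, hy⟩ : ∃ y, y = rs ((t-1)+1) := ⟨_, rfl⟩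
    rw [← hy] at h2
    obtain ⟨bt, hbt⟩ : ∃ b, b = Real.sqrt t + 1 := ⟨_, rfl⟩
    obtain ⟨bt1, hbt1⟩ : ∃ b, b = Real.sqrt ((t+1:ℕ):ℝ) + 1 := ⟨_, rfl⟩
    rw [← hbt] at h1
    rw [← hbt1] at h2
    have hbt0 : 0 < bt := by rw [hbt]; positivity
    have hbt10 : 0 < bt1 := by rw [hbt1]; positivity
    have hble : bt ≤ bt1 := by
      rw [hbt, hbt1]
      have hc : (t:ℝ) ≤ ((t+1:ℕ):ℝ) := by push_cast; linarith
      have := Real.sqrt_le_sqrt hc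
      linarith
    have hdiff : bt1 - bt ≤ 1 := by
      rw [hbt, hbt1]
      have hc : ((t+1:ℕ):ℝ) = (t:ℝ)+1 := by push_cast; ring
      have h3 : ((t:ℝ)+1) ≤ (Real.sqrt t + 1)^2 := by
        nlinarith [Real.sq_sqrt (by positivity : (0:ℝ) ≤ (t:ℝ)),
          Real.sqrt_nonneg (t:ℝ), ht]
      have h4 : Real.sqrt ((t:ℝ)+1) ≤ Real.sqrt t + 1 := by
        calc Real.sqrt ((t:ℝ)+1) ≤ Real.sqrt ((Real.sqrt t + 1)^2) := Real.sqrt_le_sqrt h3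
          _ = Real.sqrt t + 1 := Real.sqrt_sq (by positivity)
      rw [hc]
      linarith
    have hUd := qlU_lip hR hα0 hα1 hb1.1 hb1.2 hb2.1 hb2.2
    have hld := ql_diff_le (α := α) (x := rt t) (z := rt (t+1)) (y := y) hα0 hα1
    have hkey : (bt + bt1) * (rt t - rt (t+1))^2/(2*R)
        ≤ (bt1 - bt) * (qlU α R (rt t) - qlU α R (rt (t+1)))
          + (quantileLoss α (rt t) y - quantileLoss α (rt (t+1)) y) := by
      have e1 : (rt (t+1) - rt t)^2 = (rt t - rt (t+1))^2 := by ring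
      rw [e1] at h1
      have e2 : (bt + bt1) * (rt t - rt (t+1))^2/(2*R)
          = bt * (rt t - rt (t+1))^2/(2*R) + bt1 * (rt t - rt (t+1))^2/(2*R) := by ring
      have e3 : (bt1 - bt) * (qlU α R (rt t) - qlU α R (rt (t+1)))
          = bt1 * qlU α R (rt t) - bt1 * qlU α R (rt (t+1))
            - bt * qlU α R (rt t) + bt * qlU α R (rt (t+1)) := by ring
      rw [e2, e3]
      linarith [h1, h2]
    obtain ⟨dd, hdd⟩ : ∃ d, d = |rt t - rt (t+1)| := ⟨_, rfl⟩
    have hdd0 : 0 ≤ dd := hdd ▸ abs_nonneg _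
    have hsq : (rt t - rt (t+1))^2 = dd^2 := by rw [hdd, sq_abs]
    have hU1 : qlU α R (rt t) - qlU α R (rt (t+1)) ≤ dd := by
      rw [hdd]
      linarith [le_abs_self (qlU α R (rt t) - qlU α R (rt (t+1))), hUd]
    have hrhs : (bt1 - bt) * (qlU α R (rt t) - qlU α R (rt (t+1)))
        + (quantileLoss α (rt t) y - quantileLoss α (rt (t+1)) y) ≤ 2*dd := by
      have h5 : (bt1 - bt) * (qlU α R (rt t) - qlU α R (rt (t+1))) ≤ 1*dd :=
        calc (bt1 - bt) * (qlU α R (rt t) - qlU α R (rt (t+1)))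
            ≤ (bt1 - bt) * dd := mul_le_mul_of_nonneg_left hU1 (by linarith)
          _ ≤ 1*dd := mul_le_mul_of_nonneg_right hdiff hdd0
      have h6 : quantileLoss α (rt t) y - quantileLoss α (rt (t+1)) y ≤ dd := by
        rw [hdd]; exact hld
      linarith
    have hst : (0:ℝ) < Real.sqrt t := Real.sqrt_pos.2 (by positivity)
    have hkey2 : (bt + bt1) * dd^2/(2*R) ≤ 2*dd := by
      rw [← hsq]; linarith
    have hkey3 : 2*Real.sqrt t * dd^2 ≤ 4*R*dd := by
      have h7 : (bt + bt1) * dd^2 ≤ 4*R*dd := by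
        have h7a := mul_le_mul_of_nonneg_left hkey2 (by linarith : (0:ℝ) ≤ 2*R)
        have he : 2*R*((bt + bt1) * dd^2/(2*R)) = (bt + bt1)*dd^2 := by
          field_simp
        linarith [he ▸ h7a]
      have h8 : 2*Real.sqrt t ≤ bt + bt1 := by
        rw [hbt]; linarith
      nlinarith [sq_nonneg dd, hdd0]
    rw [show |rt t - rt (t+1)| = dd from hdd.symm]
    rcases eq_or_lt_of_le hdd0 with h0 | h0
    · rw [← h0]; positivity
    · rw [le_div_iff₀ hst]
      have h9 : (2*Real.sqrt t*dd)*dd ≤ (4*R)*dd := by nlinarith [hkey3]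
      have h10 : 2*Real.sqrt t*dd ≤ 4*R := le_of_mul_le_mul_right h9 h0
      nlinarith [h10]
  -- be-the-leader induction
  have hBTL : ∀ k:ℕ, ∀ x:ℝ, 0 ≤ x → x ≤ R →
      ∑ i ∈ Finset.range k, quantileLoss α (rt (i+2)) (rs (i+1))
        ≤ (Real.sqrt ((k+1:ℕ):ℝ)+1)*qlU α R x
          + ∑ i ∈ Finset.range k, quantileLoss α x (rs (i+1)) := by
    intro k
    induction k with
    | zero =>
      intro x hx0 hxR
      simp only [Finset.range_zero, Finset.sum_empty]
      have h1 := qlU_nonneg (α := α) (R := R) (x := x) hR hα0 hα1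
      have h2 : (0:ℝ) ≤ Real.sqrt ((0+1:ℕ):ℝ)+1 := by positivity
      nlinarith [h1, h2]
    | succ n ih =>
      intro x hx0 hxR
      have hn2 : 1 ≤ n+2 := by omega
      have hb := (hQB (n+2) hn2).1
      have step1 := ih (rt (n+2)) hb.1 hb.2
      have step2 := hGmin (n+2) hn2 x hx0 hxR
      have hquad : (0:ℝ) ≤ (Real.sqrt ((n+2:ℕ):ℝ) + 1) * (x - rt (n+2))^2/(2*R) := by
        positivity
      -- the sums in step2 are over range ((n+2)-1) = range (n+1)
      have hsm : Real.sqrt ((n+1:ℕ):ℝ) ≤ Real.sqrt ((n+2:ℕ):ℝ) := by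
        apply Real.sqrt_le_sqrt; push_cast; linarith
      have hUrt := qlU_nonneg (α := α) (R := R) (x := rt (n+2)) hR hα0 hα1
      have hmono : (Real.sqrt ((n+1:ℕ):ℝ)+1)*qlU α R (rt (n+2))
          ≤ (Real.sqrt ((n+2:ℕ):ℝ)+1)*qlU α R (rt (n+2)) := by
        apply mul_le_mul_of_nonneg_right _ hUrt
        linarith
      rw [Finset.sum_range_succ, Finset.sum_range_succ]
      have hsplit2 : ∀ z:ℝ, ∑ i ∈ Finset.range ((n+2)-1), quantileLoss α z (rs (i+1))
          = (∑ i ∈ Finset.range n, quantileLoss α z (rs (i+1)))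
            + quantileLoss α z (rs (n+1)) := by
        intro z
        have he : (n+2)-1 = n+1 := by omega
        rw [he, Finset.sum_range_succ]
      rw [hsplit2, hsplit2] at step2
      have hcast2 : ((n+1+1:ℕ):ℝ) = ((n+2:ℕ):ℝ) := by push_cast; ring
      rw [hcast2]
      linarith [step1, step2, hquad, hmono]
  -- final assembly
  have hmain := hBTL T (q T) hqTb.1 hqTb.2
  have hAterm : ∀ i ∈ Finset.range T,
      quantileLoss α (rt (i+1)) (rs (i+1)) - quantileLoss α (rt (i+2)) (rs (i+1))
        ≤ 2*R/Real.sqrt ((i+1:ℕ):ℝ) := by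
    intro i _
    have h1 := ql_diff_le (α := α) (x := rt (i+1)) (z := rt (i+2)) (y := rs (i+1)) hα0 hα1
    have h2 := hstab (i+1) (by omega)
    calc quantileLoss α (rt (i+1)) (rs (i+1)) - quantileLoss α (rt (i+2)) (rs (i+1))
        ≤ |rt (i+1) - rt (i+2)| := h1
      _ ≤ 2*R/Real.sqrt ((i+1:ℕ):ℝ) := h2
  have hA : ∑ i ∈ Finset.range T,
      (quantileLoss α (rt (i+1)) (rs (i+1)) - quantileLoss α (rt (i+2)) (rs (i+1)))
        ≤ ∑ i ∈ Finset.range T, 2*R/Real.sqrt ((i+1:ℕ):ℝ) :=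
    Finset.sum_le_sum hAterm
  have hA2 : ∑ i ∈ Finset.range T, 2*R/Real.sqrt ((i+1:ℕ):ℝ)
      = 2*R * ∑ i ∈ Finset.range T, 1/Real.sqrt ((i:ℝ)+1) := by
    rw [Finset.mul_sum]
    apply Finset.sum_congr rfl
    intro i _
    have : ((i+1:ℕ):ℝ) = (i:ℝ)+1 := by push_cast; ring
    rw [this, mul_one_div]
  have hA3 : ∑ i ∈ Finset.range T, 1/Real.sqrt ((i:ℝ)+1) ≤ 2*Real.sqrt T :=
    sum_one_div_sqrt_le T
  have hsqT1 : Real.sqrt ((T+1:ℕ):ℝ) ≤ Real.sqrt T + 1 := by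
    have h3 : ((T+1:ℕ):ℝ) ≤ (Real.sqrt T + 1)^2 := by
      push_cast
      nlinarith [Real.sq_sqrt (by positivity : (0:ℝ) ≤ (T:ℝ)), Real.sqrt_nonneg (T:ℝ)]
    calc Real.sqrt ((T+1:ℕ):ℝ) ≤ Real.sqrt ((Real.sqrt T + 1)^2) := Real.sqrt_le_sqrt h3
      _ = Real.sqrt T + 1 := Real.sqrt_sq (by positivity)
  have hT1 : (1:ℝ) ≤ Real.sqrt T := by
    rw [show (1:ℝ) = Real.sqrt 1 by simp]
    apply Real.sqrt_le_sqrt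
    exact_mod_cast hT
  have hUq : qlU α R (q T) ≤ R/2 := qlU_le hR hα0 hα1 hqTb.1 hqTb.2
  have hBbound : (Real.sqrt ((T+1:ℕ):ℝ)+1)*qlU α R (q T) ≤ (Real.sqrt T + 2)*(R/2) := by
    have hq0 := qlU_nonneg (α := α) (R := R) (x := q T) hR hα0 hα1
    apply mul_le_mul (by linarith) hUq hq0 (by positivity)
  have hsum_split : ∑ t ∈ Finset.range T, quantileLoss α (rt (t + 1)) (rs (t + 1))
      = (∑ i ∈ Finset.range T,
          (quantileLoss α (rt (i+1)) (rs (i+1)) - quantileLoss α (rt (i+2)) (rs (i+1))))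
        + ∑ i ∈ Finset.range T, quantileLoss α (rt (i+2)) (rs (i+1)) := by
    rw [Finset.sum_sub_distrib]
    ring
  rw [hsum_split]
  have hfin1 : (∑ i ∈ Finset.range T,
      (quantileLoss α (rt (i+1)) (rs (i+1)) - quantileLoss α (rt (i+2)) (rs (i+1))))
        ≤ 4*R*Real.sqrt T := by
    calc (∑ i ∈ Finset.range T,
        (quantileLoss α (rt (i+1)) (rs (i+1)) - quantileLoss α (rt (i+2)) (rs (i+1))))
        ≤ ∑ i ∈ Finset.range T, 2*R/Real.sqrt ((i+1:ℕ):ℝ) := hA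
      _ = 2*R * ∑ i ∈ Finset.range T, 1/Real.sqrt ((i:ℝ)+1) := hA2
      _ ≤ 2*R * (2*Real.sqrt T) := by
          apply mul_le_mul_of_nonneg_left hA3 (by linarith)
      _ = 4*R*Real.sqrt T := by ring
  have hfin2 : ∑ i ∈ Finset.range T, quantileLoss α (rt (i+2)) (rs (i+1))
      - ∑ t ∈ Finset.range T, quantileLoss α (q T) (rs (t + 1))
        ≤ (Real.sqrt T + 2)*(R/2) := by
    linarith [hmain, hBbound]
  have hfin3 : (Real.sqrt T + 2)*(R/2) ≤ (3/2)*R*Real.sqrt T := by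
    have := mul_le_mul_of_nonneg_left hT1 hR.le
    nlinarith [Real.sqrt_nonneg (T:ℝ)]
  have hRT : 0 ≤ R*Real.sqrt T := mul_nonneg hR.le (Real.sqrt_nonneg _)
  nlinarith [hfin1, hfin2, hfin3, hRT]
end

section
/- Discounted FTRL equivalence: Let β ∈ (0,1), λ ∈ (0,1), P_0 have strictly positive density p_0 on [0, R], and define P_t = λ P_0 + (1−λ)(β^{t−1} P_0 + (1−β) Σ_{i=1}^{t−1} β^{t−1−i} δ(r*_i)). Then r_t(α) := q_α(P_t) minimizes H_t(r) = (1−β)^{−1}(λ/(1−λ) + β^{t−1}) ψ(r) + Σ_{i=1}^{t−1} β^{t−1−i} l_α(r, r*_i) over ℝ, where ψ(r) = E_{r*∼P_0}[l_α(r, r*)]. -/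
open MeasureTheory

lemma quantileLoss_eq (α r s : ℝ) :
    quantileLoss α r s = max (r - s) 0 - α * (r - s) := by
  unfold quantileLoss
  rcases le_or_gt s r with h | h
  · rw [if_pos h, max_eq_left (by linarith)]; ring
  · rw [if_neg (not_le.2 h), max_eq_right (by linarith)]; ring

lemma ind_intervalIntegral (s a b : ℝ) (hab : a ≤ b) :
    ∫ x in a..b, (if s ≤ x then (1:ℝ) else 0) = max (b - s) 0 - max (a - s) 0 := by
  have hcont : ContinuousOn (fun x : ℝ => max (x - s) 0) (Set.Icc a b) :=
    (Continuous.max (continuous_id.sub continuous_const) continuous_const).continuousOn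
  have hint : IntervalIntegrable (fun x => if s ≤ x then (1:ℝ) else 0) volume a b := by
    apply IntervalIntegrable.mono_fun (intervalIntegrable_const (c := (1:ℝ)))
    · exact (Measurable.ite measurableSet_Ici measurable_const measurable_const).aestronglyMeasurable
    · filter_upwards with x
      simp only [Real.norm_eq_abs]
      split <;> simp
  have hderiv : ∀ x ∈ Set.Ioo a b,
      HasDerivWithinAt (fun x : ℝ => max (x - s) 0)
        ((fun x => if s ≤ x then (1:ℝ) else 0) x) (Set.Ioi x) x := by
    intro x hx
    rcases le_or_gt s x with h | h
    · simp only [if_pos h]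
      apply HasDerivWithinAt.congr (((hasDerivAt_id x).sub_const s).hasDerivWithinAt)
      · intro y hy
        exact max_eq_left (by simp at hy ⊢; linarith [le_of_lt hy])
      · exact max_eq_left (by linarith)
    · simp only [if_neg (not_le.2 h)]
      have : (fun x : ℝ => max (x - s) 0) =ᶠ[nhds x] fun _ => 0 := by
        filter_upwards [Iio_mem_nhds h] with y hy
        exact max_eq_right (by simp at hy; linarith)
      exact ((hasDerivAt_const x (0:ℝ)).congr_of_eventuallyEq this).hasDerivWithinAt
  have := intervalIntegral.integral_eq_sub_of_hasDeriv_right_of_le hab hcont hderiv hint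
  simpa using this

lemma key_pointwise (α s a b : ℝ) (hab : a ≤ b) :
    quantileLoss α b s - quantileLoss α a s
      = ∫ x in Set.Ioc a b, ((if s ≤ x then (1:ℝ) else 0) - α) := by
  have hint : IntervalIntegrable (fun x => if s ≤ x then (1:ℝ) else 0) volume a b := by
    apply IntervalIntegrable.mono_fun (intervalIntegrable_const (c := (1:ℝ)))
    · exact (Measurable.ite measurableSet_Ici measurable_const measurable_const).aestronglyMeasurable
    · filter_upwards with x
      simp only [Real.norm_eq_abs]
      split <;> simp
  have h1 : ∫ x in a..b, ((if s ≤ x then (1:ℝ) else 0) - α)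
      = (max (b - s) 0 - max (a - s) 0) - (b - a) * α := by
    rw [intervalIntegral.integral_sub hint (intervalIntegrable_const (c := α)),
      ind_intervalIntegral s a b hab, intervalIntegral.integral_const]
    simp
  rw [← intervalIntegral.integral_of_le hab, h1, quantileLoss_eq, quantileLoss_eq]
  ring

lemma quantile_isMinOn (μ : Measure ℝ) [IsProbabilityMeasure μ] (R α : ℝ)
    (hα0 : 0 < α) (hα1 : α < 1)
    (h0 : μ (Set.Iio 0) = 0) (hR : μ (Set.Ioi R) = 0) :
    IsMinOn (fun r => ∫ s, quantileLoss α r s ∂μ) Set.univ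
      (sInf {x : ℝ | α ≤ (μ (Set.Iic x)).toReal}) := by
  set F : ℝ → ℝ := fun x => (μ (Set.Iic x)).toReal with hF
  set S : Set ℝ := {x : ℝ | α ≤ F x} with hS
  have hFmono : Monotone F := fun u v huv =>
    ENNReal.toReal_mono (measure_ne_top μ _) (measure_mono (Set.Iic_subset_Iic.2 huv))
  have hIicR : μ (Set.Iic R) = 1 := by
    have : Set.Iic R = (Set.Ioi R)ᶜ := by simp
    rw [this, measure_compl measurableSet_Ioi (measure_ne_top μ _), hR, measure_univ]
    simp
  have hSne : S.Nonempty := ⟨R, by simp [hS, F, hIicR, le_of_lt hα1]⟩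
  have hSbdd : BddBelow S := by
    refine ⟨0, fun x hx => ?_⟩
    by_contra hxneg
    push_neg at hxneg
    have : μ (Set.Iic x) = 0 :=
      measure_mono_null (fun y hy => lt_of_le_of_lt hy hxneg) h0
    have hFx : F x = 0 := by simp [F, this]
    simp only [hS, Set.mem_setOf_eq, hFx] at hx
    linarith
  set q := sInf S with hq
  -- integrability
  have haemem : ∀ᵐ s ∂μ, s ∈ Set.Icc (0:ℝ) R := by
    have hcompl : μ (Set.Icc (0:ℝ) R)ᶜ = 0 := by
      apply measure_mono_null _ (measure_union_null h0 hR)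
      intro y hy
      simp only [Set.mem_compl_iff, Set.mem_Icc, not_and_or, not_le] at hy
      rcases hy with h | h
      · exact Or.inl h
      · exact Or.inr h
    exact mem_ae_iff.mpr hcompl
  have hmeas : ∀ r : ℝ, Measurable (fun s => quantileLoss α r s) := by
    intro r
    unfold quantileLoss
    exact ((Measurable.ite measurableSet_Iic measurable_const measurable_const).sub
      measurable_const).mul (measurable_const.sub measurable_id)
  have hintg : ∀ r : ℝ, Integrable (fun s => quantileLoss α r s) μ := by
    intro r
    refine Integrable.mono' (integrable_const (|r| + |R|)) ((hmeas r).aestronglyMeasurable) ?_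
    filter_upwards [haemem] with s hs
    have h1 : |(if s ≤ r then (1:ℝ) else 0) - α| ≤ 1 := by
      split <;> (rw [abs_le]; constructor <;> linarith)
    have h2 : |r - s| ≤ |r| + |R| := by
      have : |s| ≤ |R| := by
        rw [abs_of_nonneg hs.1, abs_of_nonneg (le_trans hs.1 hs.2)]
        exact hs.2
      calc |r - s| ≤ |r| + |s| := abs_sub _ _
        _ ≤ |r| + |R| := by linarith
    calc ‖quantileLoss α r s‖ = |(if s ≤ r then (1:ℝ) else 0) - α| * |r - s| := by
          rw [quantileLoss, norm_mul, Real.norm_eq_abs, Real.norm_eq_abs]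
      _ ≤ 1 * (|r| + |R|) := mul_le_mul h1 h2 (abs_nonneg _) zero_le_one
      _ = |r| + |R| := one_mul _
  -- key identity
  have hkey : ∀ a b : ℝ, a ≤ b →
      (∫ s, quantileLoss α b s ∂μ) - (∫ s, quantileLoss α a s ∂μ)
        = ∫ x in Set.Ioc a b, (F x - α) := by
    intro a b hab
    have hprod : Integrable (Function.uncurry fun s x => ((if s ≤ x then (1:ℝ) else 0) - α))
        (μ.prod (volume.restrict (Set.Ioc a b))) := by
      refine Integrable.mono' (integrable_const (1 + |α|)) ?_ ?_
      · apply Measurable.aestronglyMeasurable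
        apply Measurable.sub _ measurable_const
        exact Measurable.ite (measurableSet_le measurable_fst measurable_snd)
          measurable_const measurable_const
      · filter_upwards with p
        simp only [Function.uncurry, Real.norm_eq_abs]
        split
        · calc |1 - α| ≤ |(1:ℝ)| + |α| := abs_sub _ _
            _ = 1 + |α| := by simp
        · simp [abs_nonneg]
    calc (∫ s, quantileLoss α b s ∂μ) - (∫ s, quantileLoss α a s ∂μ)
        = ∫ s, (quantileLoss α b s - quantileLoss α a s) ∂μ :=
          (integral_sub (hintg b) (hintg a)).symm
      _ = ∫ s, (∫ x in Set.Ioc a b, ((if s ≤ x then (1:ℝ) else 0) - α)) ∂μ := by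
          exact integral_congr_ae (Filter.Eventually.of_forall fun s => key_pointwise α s a b hab)
      _ = ∫ x in Set.Ioc a b, (∫ s, ((if s ≤ x then (1:ℝ) else 0) - α) ∂μ) :=
          integral_integral_swap hprod
      _ = ∫ x in Set.Ioc a b, (F x - α) := by
          apply setIntegral_congr_fun measurableSet_Ioc
          intro x _
          show (∫ s, ((if s ≤ x then (1:ℝ) else 0) - α) ∂μ) = F x - α
          have hind : ∫ s, (if s ≤ x then (1:ℝ) else 0) ∂μ = F x := by
            have : (fun s => if s ≤ x then (1:ℝ) else 0)
                = (Set.Iic x).indicator (fun _ => (1:ℝ)) := by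
              funext s; simp [Set.indicator_apply, Set.mem_Iic]
            rw [this, integral_indicator_const _ measurableSet_Iic]
            simp [F, measureReal_def]
          have hi : Integrable (fun s => if s ≤ x then (1:ℝ) else 0) μ := by
            refine Integrable.mono' (integrable_const 1)
              ((Measurable.ite measurableSet_Iic measurable_const measurable_const).aestronglyMeasurable) ?_
            filter_upwards with s
            simp only [Real.norm_eq_abs]
            split <;> simp
          rw [integral_sub hi (integrable_const α), hind, integral_const]
          simp
  -- now the min property
  rw [isMinOn_iff]
  intro x _
  rcases le_total q x with hqx | hxq
  · have hkey' := hkey q x hqx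
    have hnn : 0 ≤ ∫ y in Set.Ioc q x, (F y - α) := by
      apply setIntegral_nonneg measurableSet_Ioc
      intro y hy
      have : ∃ z ∈ S, z < y := exists_lt_of_csInf_lt hSne hy.1
      obtain ⟨z, hzS, hzy⟩ := this
      have : α ≤ F y := le_trans hzS (hFmono (le_of_lt hzy))
      linarith
    linarith
  · have hkey' := hkey x q hxq
    have hle : ∫ y in Set.Ioc x q, (F y - α) ≤ 0 := by
      rw [integral_Ioc_eq_integral_Ioo]
      apply setIntegral_nonpos measurableSet_Ioo
      intro y hy
      have hynotS : y ∉ S := fun hyS => absurd (csInf_le hSbdd hyS) (not_le.2 hy.2)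
      simp only [hS, Set.mem_setOf_eq, not_le] at hynotS
      linarith
    linarith

lemma quantileLoss_integrable (μ : Measure ℝ) [IsFiniteMeasure μ] (R α r : ℝ)
    (h0 : μ (Set.Iio 0) = 0) (hR : μ (Set.Ioi R) = 0) :
    Integrable (fun s => quantileLoss α r s) μ := by
  have haemem : ∀ᵐ s ∂μ, s ∈ Set.Icc (0:ℝ) R := by
    apply mem_ae_iff.mpr
    apply measure_mono_null _ (measure_union_null h0 hR)
    intro y hy
    simp only [Set.mem_compl_iff, Set.mem_Icc, Set.mem_setOf_eq, not_and, not_le] at hy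
    simp only [Set.mem_union, Set.mem_Iio, Set.mem_Ioi]
    rcases lt_or_ge y 0 with h | h
    · exact Or.inl h
    · exact Or.inr (hy h)
  have hmeas : Measurable (fun s => quantileLoss α r s) := by
    unfold quantileLoss
    exact ((Measurable.ite measurableSet_Iic measurable_const measurable_const).sub
      measurable_const).mul (measurable_const.sub measurable_id)
  refine Integrable.mono' (integrable_const ((1 + |α|) * (|r| + |R|)))
    hmeas.aestronglyMeasurable ?_
  filter_upwards [haemem] with s hs
  have h1 : |(if s ≤ r then (1:ℝ) else 0) - α| ≤ 1 + |α| := by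
    calc |(if s ≤ r then (1:ℝ) else 0) - α| ≤ |(if s ≤ r then (1:ℝ) else 0)| + |α| :=
        abs_sub _ _
      _ ≤ 1 + |α| := by split <;> simp
  have h2 : |r - s| ≤ |r| + |R| := by
    have : |s| ≤ |R| := by
      rw [abs_of_nonneg hs.1, abs_of_nonneg (le_trans hs.1 hs.2)]
      exact hs.2
    calc |r - s| ≤ |r| + |s| := abs_sub _ _
      _ ≤ |r| + |R| := by linarith
  calc ‖quantileLoss α r s‖ = |(if s ≤ r then (1:ℝ) else 0) - α| * |r - s| := by
        rw [quantileLoss, norm_mul, Real.norm_eq_abs, Real.norm_eq_abs]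
    _ ≤ (1 + |α|) * (|r| + |R|) :=
        mul_le_mul h1 h2 (abs_nonneg _) (by positivity)

/-- Discounted FTRL equivalence: the α-quantile of
`P_t = λP_0 + (1−λ)(β^{t−1}P_0 + (1−β)Σ_i β^{t−1−i} δ(r*_i))` minimizes
`H_t(r) = (1−β)^{−1}(λ/(1−λ) + β^{t−1}) ψ(r) + Σ_i β^{t−1−i} l_α(r, r*_i)`. -/
theorem discounted_ftrl_equivalence
    (R : ℝ) (hR : 0 < R) (α : ℝ) (hα : α ∈ Set.Ioo (0:ℝ) 1)
    (β : ℝ) (hβ : β ∈ Set.Ioo (0:ℝ) 1)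
    (lam : ℝ) (hlam : lam ∈ Set.Ioo (0:ℝ) 1)
    (p0 : ℝ → ℝ) (hp0cont : ContinuousOn p0 (Set.Icc 0 R))
    (hp0pos : ∀ x ∈ Set.Icc (0:ℝ) R, 0 < p0 x)
    (P0 : Measure ℝ)
    (hP0 : P0 = (volume.restrict (Set.Icc 0 R)).withDensity
      (fun x => ENNReal.ofReal (p0 x)))
    (hP0prob : IsProbabilityMeasure P0)
    (t : ℕ) (ht : 1 ≤ t) (rs : ℕ → ℝ) (hrs : ∀ i, rs i ∈ Set.Icc (0:ℝ) R)
    (Pt : Measure ℝ)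
    (hPt : Pt = ENNReal.ofReal lam • P0
        + ENNReal.ofReal (1 - lam) •
            (ENNReal.ofReal (β ^ (t - 1)) • P0
              + ∑ i ∈ Finset.range (t - 1),
                  ENNReal.ofReal ((1 - β) * β ^ (t - 2 - i)) •
                    Measure.dirac (rs (i + 1))))
    (rt : ℝ) (hrt : rt = sInf {x : ℝ | α ≤ (Pt (Set.Iic x)).toReal}) :
    IsMinOn (fun r : ℝ =>
        (1 - β)⁻¹ * (lam / (1 - lam) + β ^ (t - 1))
            * (∫ s, quantileLoss α r s ∂P0)
          + ∑ i ∈ Finset.range (t - 1), β ^ (t - 2 - i) * quantileLoss α r (rs (i + 1)))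
      Set.univ rt := by
  obtain ⟨hα0, hα1⟩ := hα
  obtain ⟨hβ0, hβ1⟩ := hβ
  obtain ⟨hlam0, hlam1⟩ := hlam
  -- P0 support facts
  have hP0Iio : P0 (Set.Iio 0) = 0 := by
    rw [hP0, withDensity_apply _ measurableSet_Iio]
    apply setLIntegral_measure_zero
    rw [Measure.restrict_apply measurableSet_Iio]
    have : Set.Iio (0:ℝ) ∩ Set.Icc 0 R = ∅ := by
      ext x; simp only [Set.mem_inter_iff, Set.mem_Iio, Set.mem_Icc, Set.mem_empty_iff_false,
        iff_false, not_and]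
      intro h1 h2; linarith
    rw [this, measure_empty]
  have hP0Ioi : P0 (Set.Ioi R) = 0 := by
    rw [hP0, withDensity_apply _ measurableSet_Ioi]
    apply setLIntegral_measure_zero
    rw [Measure.restrict_apply measurableSet_Ioi]
    have : Set.Ioi R ∩ Set.Icc 0 R = ∅ := by
      ext x; simp only [Set.mem_inter_iff, Set.mem_Ioi, Set.mem_Icc, Set.mem_empty_iff_false,
        iff_false, not_and]
      intro h1 h2; linarith
    rw [this, measure_empty]
  -- dirac support facts
  have hdIio : ∀ i : ℕ, Measure.dirac (rs i) (Set.Iio 0) = 0 := by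
    intro i
    rw [Measure.dirac_apply' _ measurableSet_Iio]
    apply Set.indicator_of_notMem
    simp only [Set.mem_Iio, not_lt]
    exact (hrs i).1
  have hdIoi : ∀ i : ℕ, Measure.dirac (rs i) (Set.Ioi R) = 0 := by
    intro i
    rw [Measure.dirac_apply' _ measurableSet_Ioi]
    apply Set.indicator_of_notMem
    simp only [Set.mem_Ioi, not_lt]
    exact (hrs i).2
  -- Pt applied to sets
  have hPtapply : ∀ s : Set ℝ, Pt s
      = ENNReal.ofReal lam * P0 s
        + ENNReal.ofReal (1 - lam) * (ENNReal.ofReal (β ^ (t - 1)) * P0 s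
          + ∑ i ∈ Finset.range (t - 1),
              ENNReal.ofReal ((1 - β) * β ^ (t - 2 - i)) * Measure.dirac (rs (i + 1)) s) := by
    intro s
    rw [hPt]
    simp only [Measure.add_apply, Measure.smul_apply, smul_eq_mul,
      Measure.finset_sum_apply]
  -- geometric sum
  have hgeom : ∑ i ∈ Finset.range (t - 1), (1 - β) * β ^ (t - 2 - i) = 1 - β ^ (t - 1) := by
    have h1 : ∀ i ∈ Finset.range (t - 1), (1 - β) * β ^ (t - 2 - i)
        = (fun j => (1 - β) * β ^ j) ((t - 1) - 1 - i) := by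
      intro i hi
      have : t - 2 - i = (t - 1) - 1 - i := by omega
      rw [this]
    have hne : β - 1 ≠ 0 := by intro h; apply absurd hβ1; simp [show β = 1 by linarith]
    rw [Finset.sum_congr rfl h1, Finset.sum_range_reflect (fun j => (1 - β) * β ^ j) (t - 1),
      ← Finset.mul_sum, geom_sum_eq (ne_of_lt hβ1)]
    field_simp
    ring
  -- Pt is a probability measure
  have hβpow_le : β ^ (t - 1) ≤ 1 := pow_le_one₀ (le_of_lt hβ0) (le_of_lt hβ1)
  have hPtuniv : Pt Set.univ = 1 := by
    rw [hPtapply]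
    simp only [measure_univ, Measure.dirac_apply_of_mem (Set.mem_univ _), mul_one]
    rw [← ENNReal.ofReal_sum_of_nonneg
        (fun i _ => mul_nonneg (by linarith) (pow_nonneg hβ0.le _)), hgeom,
      ← ENNReal.ofReal_add (pow_nonneg hβ0.le _) (by linarith [hβpow_le]),
      ← ENNReal.ofReal_mul (by linarith)]
    rw [show β ^ (t - 1) + (1 - β ^ (t - 1)) = 1 by ring, mul_one,
      ← ENNReal.ofReal_add (le_of_lt hlam0) (by linarith)]
    norm_num
  have hPtprob : IsProbabilityMeasure Pt := ⟨hPtuniv⟩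
  have hPtIio : Pt (Set.Iio 0) = 0 := by
    rw [hPtapply, hP0Iio]
    simp only [mul_zero, zero_add]
    rw [Finset.sum_congr rfl (fun i _ => by rw [hdIio (i + 1), mul_zero])]
    simp
  have hPtIoi : Pt (Set.Ioi R) = 0 := by
    rw [hPtapply, hP0Ioi]
    simp only [mul_zero, zero_add]
    rw [Finset.sum_congr rfl (fun i _ => by rw [hdIoi (i + 1), mul_zero])]
    simp
  -- integral decomposition
  have hdiracInt : ∀ (i : ℕ) (r : ℝ), Integrable (fun s => quantileLoss α r s)
      (Measure.dirac (rs i)) :=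
    fun i r => quantileLoss_integrable _ R α r (hdIio i) (hdIoi i)
  have hP0Int : ∀ r : ℝ, Integrable (fun s => quantileLoss α r s) P0 :=
    fun r => quantileLoss_integrable _ R α r hP0Iio hP0Ioi
  have hGdecomp : ∀ r : ℝ, (∫ s, quantileLoss α r s ∂Pt)
      = lam * (∫ s, quantileLoss α r s ∂P0)
        + (1 - lam) * (β ^ (t - 1) * (∫ s, quantileLoss α r s ∂P0)
          + ∑ i ∈ Finset.range (t - 1),
              (1 - β) * β ^ (t - 2 - i) * quantileLoss α r (rs (i + 1))) := by
    intro r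
    rw [hPt]
    have hi2 : Integrable (fun s => quantileLoss α r s)
        (ENNReal.ofReal (β ^ (t - 1)) • P0
          + ∑ i ∈ Finset.range (t - 1),
              ENNReal.ofReal ((1 - β) * β ^ (t - 2 - i)) • Measure.dirac (rs (i + 1))) := by
      rw [integrable_add_measure]
      constructor
      · exact (hP0Int r).smul_measure ENNReal.ofReal_ne_top
      · rw [integrable_finset_sum_measure]
        exact fun i _ => (hdiracInt (i + 1) r).smul_measure ENNReal.ofReal_ne_top
    rw [integral_add_measure ((hP0Int r).smul_measure ENNReal.ofReal_ne_top)
        (hi2.smul_measure ENNReal.ofReal_ne_top)]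
    rw [integral_smul_measure, integral_smul_measure, integral_add_measure
        ((hP0Int r).smul_measure ENNReal.ofReal_ne_top)
        (by rw [integrable_finset_sum_measure];
            exact fun i _ => (hdiracInt (i + 1) r).smul_measure ENNReal.ofReal_ne_top)]
    rw [integral_smul_measure,
      integral_finset_sum_measure
        (fun i _ => (hdiracInt (i + 1) r).smul_measure ENNReal.ofReal_ne_top)]
    simp only [integral_smul_measure, integral_dirac, smul_eq_mul,
      ENNReal.toReal_ofReal (le_of_lt hlam0),
      ENNReal.toReal_ofReal (by linarith : (0:ℝ) ≤ 1 - lam),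
      ENNReal.toReal_ofReal (pow_nonneg hβ0.le (t - 1))]
    have hterm : ∀ i ∈ Finset.range (t - 1),
        (ENNReal.ofReal ((1 - β) * β ^ (t - 2 - i))).toReal * quantileLoss α r (rs (i + 1))
          = (1 - β) * β ^ (t - 2 - i) * quantileLoss α r (rs (i + 1)) := by
      intro i _
      rw [ENNReal.toReal_ofReal (mul_nonneg (by linarith) (pow_nonneg hβ0.le _))]
    rw [Finset.sum_congr rfl hterm]
  -- min property
  have hmin : IsMinOn (fun r => ∫ s, quantileLoss α r s ∂Pt) Set.univ rt := by
    rw [hrt]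
    exact quantile_isMinOn Pt R α hα0 hα1 hPtIio hPtIoi
  -- rewrite objective
  have hobj : ∀ r : ℝ,
      (1 - β)⁻¹ * (lam / (1 - lam) + β ^ (t - 1)) * (∫ s, quantileLoss α r s ∂P0)
        + ∑ i ∈ Finset.range (t - 1), β ^ (t - 2 - i) * quantileLoss α r (rs (i + 1))
      = ((1 - lam) * (1 - β))⁻¹ * (∫ s, quantileLoss α r s ∂Pt) := by
    intro r
    rw [hGdecomp r]
    have hfactor : ∑ i ∈ Finset.range (t - 1),
        (1 - β) * β ^ (t - 2 - i) * quantileLoss α r (rs (i + 1))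
      = (1 - β) * ∑ i ∈ Finset.range (t - 1),
          β ^ (t - 2 - i) * quantileLoss α r (rs (i + 1)) := by
      rw [Finset.mul_sum]
      exact Finset.sum_congr rfl fun i _ => by ring
    rw [hfactor]
    set A := ∫ s, quantileLoss α r s ∂P0
    set B := ∑ i ∈ Finset.range (t - 1), β ^ (t - 2 - i) * quantileLoss α r (rs (i + 1))
    have h1 : (1:ℝ) - lam ≠ 0 := by linarith
    have h2 : (1:ℝ) - β ≠ 0 := by linarith
    field_simp
    ring
  rw [isMinOn_iff] at hmin ⊢
  intro x hx
  rw [hobj x, hobj rt]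
  apply mul_le_mul_of_nonneg_left (hmin x hx)
  apply inv_nonneg.mpr
  nlinarith
end
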